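/- arXiv:1507.04739 — 4 statements merged into one kernel-verified Lean document; each statement's English description precedes it below -/
import Mathlib

section
/- Let G = (V,E) be a finite bipartite simple graph with positive edge weights (θ_e)_{e∈E}, and let H be a 2-lift of G, where each edge of H lying above an edge e of G is given the weight θ_e. Then P_G(z)^2 ≥ P_H(z) for every z > 0, and ν(H) = 2 ν(G). -/
open Finset
open scoped BigOperators Classical

noncomputable section

/-- The finite set of edges of a graph on a finite vertex type. -/
def edgeFS {V : Type*} [Fintype V] (G : SimpleGraph V) : Finset (Sym2 V) :=
  (Set.toFinite G.edgeSet).toFinset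

/-- The finite set of neighbours of a vertex. -/
def nbrFS {V : Type*} [Fintype V] (G : SimpleGraph V) (u : V) : Finset V :=
  (Set.toFinite (G.neighborSet u)).toFinset

/-- `M` is (the edge set of) a matching of `G`: a set of pairwise disjoint edges. -/
def IsMatchingF {V : Type*} (G : SimpleGraph V) (M : Finset (Sym2 V)) : Prop :=
  (↑M ⊆ G.edgeSet) ∧ ∀ e ∈ M, ∀ f ∈ M, e ≠ f → ∀ v : V, v ∈ e → v ∉ f

/-- The weighted matching count `w_k(G) = ∑_{M matching, |M| = k} ∏_{e ∈ M} θ_e`. -/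
def wCount {V : Type*} [Fintype V] (G : SimpleGraph V) (θ : Sym2 V → ℝ) (k : ℕ) : ℝ :=
  ∑ M ∈ Finset.univ.filter
      (fun M : Finset (Sym2 V) => IsMatchingF G M ∧ M.card = k),
    ∏ e ∈ M, θ e

/-- The matching number `ν(G) = max {k | w_k(G) > 0}`. -/
def nuW {V : Type*} [Fintype V] (G : SimpleGraph V) (θ : Sym2 V → ℝ) : ℕ :=
  sSup {k : ℕ | 0 < wCount G θ k}

/-- The weighted matching generating function `P_G(z) = ∑_{k=0}^{ν(G)} w_k(G) z^k`. -/
def PW {V : Type*} [Fintype V] (G : SimpleGraph V) (θ : Sym2 V → ℝ) (z : ℝ) : ℝ :=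
  ∑ k ∈ Finset.range (nuW G θ + 1), wCount G θ k * z ^ k

/-- `incSum G x v = ∑_{e ∋ v} x_e`. -/
def incSum {V : Type*} [Fintype V] (G : SimpleGraph V) (x : Sym2 V → ℝ) (v : V) : ℝ :=
  ∑ e ∈ (edgeFS G).filter (fun e => v ∈ e), x e

/-- Membership in the fractional matching polytope `FM(G)`. -/
def memFM {V : Type*} [Fintype V] (G : SimpleGraph V) (x : Sym2 V → ℝ) : Prop :=
  (∀ e ∈ edgeFS G, 0 ≤ x e) ∧ ∀ v : V, incSum G x v ≤ 1

/-- The fractional matching number `ν*(G) = max_{x ∈ FM(G)} ∑_e x_e`. -/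
def nuStar {V : Type*} [Fintype V] (G : SimpleGraph V) : ℝ :=
  sSup {r : ℝ | ∃ x : Sym2 V → ℝ, memFM G x ∧ r = ∑ e ∈ edgeFS G, x e}

/-- The weighted Bethe entropy `S^B_G(x)` (with the convention `0 · ln 0 = 0`, which holds
since `Real.log 0 = 0`). -/
def SBW {V : Type*} [Fintype V] (G : SimpleGraph V) (θ x : Sym2 V → ℝ) : ℝ :=
  (∑ e ∈ edgeFS G, (x e * Real.log (θ e / x e) + (1 - x e) * Real.log (1 - x e)))
  - ∑ v : V, (1 - incSum G x v) * Real.log (1 - incSum G x v)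

/-- `y : V × V → ℝ` is a (positive) solution on directed edges of the message recursion
`y_{u→v} = z / (1 + ∑_{w ∈ ∂u∖{v}} θ_{wu} y_{w→u})`. -/
def MsgFP {V : Type*} [Fintype V] (G : SimpleGraph V) (θ : Sym2 V → ℝ) (z : ℝ)
    (y : V × V → ℝ) : Prop :=
  ∀ u v : V, G.Adj u v →
    0 < y (u, v) ∧
    y (u, v) = z / (1 + ∑ w ∈ (nbrFS G u).erase v, θ s(w, u) * y (w, u))

/-- `H` (on vertex set `W × Bool`) is a 2-lift of `G` (on vertex set `W`). -/
def IsTwoLift {W : Type*} (G : SimpleGraph W) (H : SimpleGraph (W × Bool)) : Prop :=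
  (∀ u v : W, ¬ G.Adj u v → ∀ i j : Bool, ¬ H.Adj (u, i) (v, j)) ∧
  (∀ u v : W, G.Adj u v →
    ((H.Adj (u, false) (v, false) ∧ H.Adj (u, true) (v, true) ∧
      ¬ H.Adj (u, false) (v, true) ∧ ¬ H.Adj (u, true) (v, false)) ∨
     (H.Adj (u, false) (v, true) ∧ H.Adj (u, true) (v, false) ∧
      ¬ H.Adj (u, false) (v, false) ∧ ¬ H.Adj (u, true) (v, true))))

/-!
Fix a proper 2-colouring of `G`. The edges of a matching `N` of `H` project to edges of `G`, each
vertex lying under at most two of them, so the set of projected edges (the shadow of `N`) is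
properly 2-edge-colourable: orient it so that every vertex is the tail of at most one edge and the
head of at most one edge (contract cherries and induct), and colour each edge by the colour of its
head. A labelling of the edges of `N` that is proper with respect to adjacency of projections
splits `N` into two matchings of `G`, its halves, of the same total size and weight. This gives
`ν(H) ≤ 2ν(G)`, and lifting a maximum matching of `G` gives equality.

For `P_H(z) ≤ P_G(z)²` the splitting must be injective. The two lifts of a projected edge `e` are
told apart by whether they pass through a reference copy `ρ e` of an endpoint of `e`, chosen once
per shadow from one reference matching with that shadow. Two edges of `N` over distinct adjacent
projections either both agree or both disagree with the reference matching, so these labels are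
proper for every matching with that shadow, and `N` is recovered from its halves.
-/

section MatchingPolynomial

variable {V : Type*} {G : SimpleGraph V} {θ : Sym2 V → ℝ} (hθ : ∀ e ∈ G.edgeSet, 0 < θ e)
include hθ

lemma prod_pos_of_isMatchingF {M : Finset (Sym2 V)} (hM : IsMatchingF G M) :
    0 < ∏ e ∈ M, θ e :=
  prod_pos fun e he => hθ e (hM.1 he)

variable [Fintype V]

lemma wCount_pos_iff {k : ℕ} : 0 < wCount G θ k ↔ ∃ M, IsMatchingF G M ∧ #M = k := by
  rw [wCount, sum_pos_iff_of_nonneg fun M hM =>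
    (prod_pos_of_isMatchingF hθ (mem_filter.1 hM).2.1).le]
  simp only [mem_filter, mem_univ, true_and]
  exact ⟨fun ⟨M, hM, _⟩ => ⟨M, hM⟩, fun ⟨M, hM⟩ => ⟨M, hM, prod_pos_of_isMatchingF hθ hM.1⟩⟩

lemma isGreatest_nuW : IsGreatest {k | ∃ M, IsMatchingF G M ∧ #M = k} (nuW G θ) := by
  have hS : {k | 0 < wCount G θ k} = {k | ∃ M, IsMatchingF G M ∧ #M = k} :=
    Set.ext fun k => wCount_pos_iff hθ
  have hbdd : BddAbove {k | ∃ M, IsMatchingF G M ∧ #M = k} :=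
    ⟨Fintype.card (Sym2 V), by rintro _ ⟨M, -, rfl⟩; exact card_le_univ M⟩
  rw [nuW, hS]
  exact ⟨Nat.sSup_mem ⟨0, ∅, ⟨by simp, by simp⟩, rfl⟩ hbdd, fun k hk => le_csSup hbdd hk⟩

lemma PW_eq_sum (z : ℝ) :
    PW G θ z = ∑ M ∈ univ.filter (IsMatchingF G), (∏ e ∈ M, θ e) * z ^ #M := by
  rw [PW, ← sum_fiberwise_of_maps_to (g := card) (t := range (nuW G θ + 1))
    fun M hM => mem_range_succ_iff.2 ((isGreatest_nuW hθ).2 ⟨M, (mem_filter.1 hM).2, rfl⟩)]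
  refine sum_congr rfl fun k _ => ?_
  rw [wCount, sum_mul, filter_filter]
  refine sum_congr (by simp) fun M hM => ?_
  rw [(mem_filter.1 hM).2.2]

end MatchingPolynomial

section Orientation

variable {V : Type*}

/-- An orientation of `T` in which all in- and out-degrees are at most one, encoded by its set of
darts `D`. -/
def IsInjOrientation (T : Finset (Sym2 V)) (D : Finset (V × V)) : Prop :=
  D.image (Function.uncurry Sym2.mk) = T ∧ Set.InjOn (Function.uncurry Sym2.mk) (D : Set (V × V)) ∧
    Set.InjOn Prod.fst (D : Set (V × V)) ∧ Set.InjOn Prod.snd (D : Set (V × V))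

namespace IsInjOrientation

variable {T : Finset (Sym2 V)} {D : Finset (V × V)}

lemma fst_notMem (hD : IsInjOrientation T D) {v : V} (hv : ∀ e ∈ T, v ∉ e) :
    v ∉ D.image Prod.fst := by
  rw [mem_image]
  rintro ⟨d, hd, rfl⟩
  exact hv _ (hD.1 ▸ mem_image_of_mem _ hd) (Sym2.mem_mk_left _ _)

lemma snd_notMem (hD : IsInjOrientation T D) {v : V} (hv : ∀ e ∈ T, v ∉ e) :
    v ∉ D.image Prod.snd := by
  rw [mem_image]
  rintro ⟨d, hd, rfl⟩
  exact hv _ (hD.1 ▸ mem_image_of_mem _ hd) (Sym2.mem_mk_right _ _)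

lemma insert_dart (hD : IsInjOrientation T D) {x y : V} (hxy : s(x, y) ∉ T)
    (hx : x ∉ D.image Prod.fst) (hy : y ∉ D.image Prod.snd) :
    IsInjOrientation (insert s(x, y) T) (insert (x, y) D) := by
  have hd : (x, y) ∉ D := fun h => hxy (hD.1 ▸ mem_image_of_mem _ h)
  simp only [IsInjOrientation, image_insert, hD.1, coe_insert, Set.injOn_insert hd]
  refine ⟨by simp, ⟨hD.2.1, ?_⟩, ⟨hD.2.2.1, ?_⟩, ⟨hD.2.2.2, ?_⟩⟩
  · rwa [← coe_image, hD.1]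
  · rwa [← coe_image]
  · rwa [← coe_image]

lemma erase (hD : IsInjOrientation T D) {d : V × V} (hd : d ∈ D) :
    IsInjOrientation (T.erase s(d.1, d.2)) (D.erase d) := by
  refine ⟨?_, hD.2.1.mono (by simp), hD.2.2.1.mono (by simp), hD.2.2.2.mono (by simp)⟩
  rw [← hD.1]
  ext e
  simp only [mem_image, mem_erase]
  constructor
  · rintro ⟨d', ⟨hne, hd'⟩, rfl⟩
    exact ⟨fun h => hne (hD.2.1 hd' hd h), d', hd', rfl⟩
  · rintro ⟨hne, d', hd', rfl⟩
    exact ⟨d', ⟨fun h => hne (h ▸ rfl), hd'⟩, rfl⟩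

end IsInjOrientation

lemma IsInjOrientation.insert_triangle {T : Finset (Sym2 V)} {D : Finset (V × V)}
    (hD : IsInjOrientation T D) {w a b : V} (hwa : w ≠ a) (hwb : w ≠ b)
    (hab : a ≠ b) (hw : ∀ e ∈ T, w ∉ e) (ha : ∀ e ∈ T, a ∉ e) (hb : ∀ e ∈ T, b ∉ e) :
    IsInjOrientation (insert s(b, w) (insert s(a, b) (insert s(w, a) T)))
      (insert (b, w) (insert (a, b) (insert (w, a) D))) := by
  have hab' : s(a, b) ∉ insert s(w, a) T := by
    simpa [hwa.symm, hwb.symm, hab.symm] using fun h => ha _ h (Sym2.mem_mk_left a b)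
  have hbw : s(b, w) ∉ insert s(a, b) (insert s(w, a) T) := by
    simpa [hwa, hwb.symm, hab.symm] using fun h => hb _ h (Sym2.mem_mk_left b w)
  exact ((hD.insert_dart (fun h => hw _ h (Sym2.mem_mk_left w a)) (hD.fst_notMem hw)
    (hD.snd_notMem ha)).insert_dart hab' (by simp [hwa.symm, hD.fst_notMem ha])
    (by simp [hab.symm, hD.snd_notMem hb])).insert_dart hbw
    (by simp [hwb.symm, hab.symm, hD.fst_notMem hb]) (by simp [hwa, hwb, hD.snd_notMem hw])

lemma IsInjOrientation.subdivide {T : Finset (Sym2 V)} {D : Finset (V × V)}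
    (hD : IsInjOrientation T D) {x y w : V} (hd : (x, y) ∈ D) (hxy : x ≠ y)
    (hw : ∀ e ∈ T, w ∉ e) :
    IsInjOrientation (insert s(w, y) (insert s(x, w) (T.erase s(x, y))))
      (insert (w, y) (insert (x, w) (D.erase (x, y)))) := by
  have hxyT : s(x, y) ∈ T := hD.1 ▸ mem_image_of_mem _ hd
  have hxw : x ≠ w := fun h => hw _ hxyT (h ▸ Sym2.mem_mk_left x y)
  have hyw : y ≠ w := fun h => hw _ hxyT (h ▸ Sym2.mem_mk_right x y)
  have hw' : ∀ e ∈ T.erase s(x, y), w ∉ e := fun e he => hw e (mem_of_mem_erase he)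
  have hE := hD.erase hd
  have hx : x ∉ (D.erase (x, y)).image Prod.fst := by
    rw [mem_image]
    rintro ⟨d', hd', h⟩
    exact (mem_erase.1 hd').1 (hD.2.2.1 (mem_erase.1 hd').2 hd h)
  have hy : y ∉ (D.erase (x, y)).image Prod.snd := by
    rw [mem_image]
    rintro ⟨d', hd', h⟩
    exact (mem_erase.1 hd').1 (hD.2.2.2 (mem_erase.1 hd').2 hd h)
  have hwy : s(w, y) ∉ insert s(x, w) (T.erase s(x, y)) := by
    simpa [hxy.symm, hyw] using fun h => hw' _ h (Sym2.mem_mk_left w y)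
  exact (hE.insert_dart (fun h => hw' _ h (Sym2.mem_mk_right x w)) hx
    (hE.snd_notMem hw')).insert_dart hwy (by simp [hxw.symm, hE.fst_notMem hw'])
    (by simp [hyw, hy])

variable {T : Finset (Sym2 V)}

lemma notMem_of_card_filter_le_two {v : V} (hdeg : #{e ∈ T | v ∈ e} ≤ 2) {e₁ e₂ e : Sym2 V}
    (h₁ : e₁ ∈ T) (h₂ : e₂ ∈ T) (h₁₂ : e₁ ≠ e₂) (hv₁ : v ∈ e₁) (hv₂ : v ∈ e₂) (he : e ∈ T)
    (he₁ : e ≠ e₁) (he₂ : e ≠ e₂) : v ∉ e := fun hv => by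
  have := two_lt_card_iff (s := {e ∈ T | v ∈ e}) |>.2 ⟨e₁, e₂, e, by simp [h₁, hv₁],
    by simp [h₂, hv₂], by simp [he, hv], h₁₂, he₁.symm, he₂.symm⟩
  omega

lemma card_filter_contract_le {w a b : V} (ha : s(w, a) ∈ T) (hb : s(w, b) ∈ T) (v : V) :
    #{e ∈ insert s(a, b) ((T.erase s(w, a)).erase s(w, b)) | v ∈ e} ≤ #{e ∈ T | v ∈ e} := by
  by_cases hv : v ∈ s(a, b)
  · have hwv : s(w, v) ∈ T ∧ s(w, v) ∉ (T.erase s(w, a)).erase s(w, b) := by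
      rcases Sym2.mem_iff.1 hv with rfl | rfl <;> simp [ha, hb]
    calc #{e ∈ insert s(a, b) ((T.erase s(w, a)).erase s(w, b)) | v ∈ e}
        ≤ #(insert s(a, b) ({e ∈ T | v ∈ e}.erase s(w, v))) := by
          refine card_le_card fun e he => ?_
          rcases mem_insert.1 (mem_filter.1 he).1 with rfl | he'
          · exact mem_insert_self _ _
          · exact mem_insert_of_mem (mem_erase.2 ⟨fun h => hwv.2 (h ▸ he'),
              mem_filter.2 ⟨mem_of_mem_erase (mem_of_mem_erase he'), (mem_filter.1 he).2⟩⟩)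
      _ ≤ #({e ∈ T | v ∈ e}.erase s(w, v)) + 1 := card_insert_le _ _
      _ = #{e ∈ T | v ∈ e} := card_erase_add_one (by simp [hwv.1])
  · refine card_le_card fun e he => ?_
    obtain ⟨he, hve⟩ := mem_filter.1 he
    rcases mem_insert.1 he with rfl | he
    · exact absurd hve hv
    · exact mem_filter.2 ⟨mem_of_mem_erase (mem_of_mem_erase he), hve⟩

lemma exists_isInjOrientation_of_triangle (hdeg : ∀ v, #{e ∈ T | v ∈ e} ≤ 2) {w a b : V}
    (hwa : w ≠ a) (hwb : w ≠ b) (hab : a ≠ b) (ha : s(w, a) ∈ T) (hb : s(w, b) ∈ T)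
    (hg : s(a, b) ∈ T)
    (ih : ∃ D, IsInjOrientation (((T.erase s(w, a)).erase s(w, b)).erase s(a, b)) D) :
    ∃ D, IsInjOrientation T D := by
  obtain ⟨D, hD⟩ := ih
  have hne : s(w, a) ≠ s(w, b) ∧ s(w, a) ≠ s(a, b) ∧ s(w, b) ≠ s(a, b) := by
    simp [hab, hwa, hwb, hwa.symm]
  have hT' : ∀ e ∈ ((T.erase s(w, a)).erase s(w, b)).erase s(a, b),
      e ≠ s(a, b) ∧ e ≠ s(w, b) ∧ e ≠ s(w, a) ∧ e ∈ T := by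
    simp
  have key := hD.insert_triangle hwa hwb hab
    (fun e he => notMem_of_card_filter_le_two (hdeg w) ha hb hne.1 (by simp) (by simp)
      (hT' e he).2.2.2 (hT' e he).2.2.1 (hT' e he).2.1)
    (fun e he => notMem_of_card_filter_le_two (hdeg a) ha hg hne.2.1 (by simp) (by simp)
      (hT' e he).2.2.2 (hT' e he).2.2.1 (hT' e he).1)
    (fun e he => notMem_of_card_filter_le_two (hdeg b) hb hg hne.2.2 (by simp) (by simp)
      (hT' e he).2.2.2 (hT' e he).2.1 (hT' e he).1)
  have hTeq : insert s(b, w) (insert s(a, b) (insert s(w, a)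
      (((T.erase s(w, a)).erase s(w, b)).erase s(a, b)))) = T := by
    ext e
    simp only [mem_insert, mem_erase, Sym2.eq_swap (a := b) (b := w)]
    constructor
    · rintro (rfl | rfl | rfl | ⟨-, -, -, he⟩) <;> assumption
    · tauto
  exact ⟨_, hTeq ▸ key⟩

lemma exists_isInjOrientation_of_cherry (hdeg : ∀ v, #{e ∈ T | v ∈ e} ≤ 2) {w a b : V}
    (hwa : w ≠ a) (hwb : w ≠ b) (hab : a ≠ b) (ha : s(w, a) ∈ T) (hb : s(w, b) ∈ T)
    (hg : s(a, b) ∉ T)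
    (ih : ∃ D, IsInjOrientation (insert s(a, b) ((T.erase s(w, a)).erase s(w, b))) D) :
    ∃ D, IsInjOrientation T D := by
  obtain ⟨D, hD⟩ := ih
  obtain ⟨⟨x, y⟩, hd, hxy⟩ := mem_image.1 (hD.1 ▸ mem_insert_self s(a, b) _)
  simp only [Function.uncurry_apply_pair] at hxy
  have hab' : s(w, a) ≠ s(w, b) := fun h => hab (Sym2.congr_right.1 h)
  have hxy' : x ≠ y := fun h => hab (Sym2.mk_isDiag_iff.1 (hxy ▸ Sym2.mk_isDiag_iff.2 h))
  have key := hD.subdivide (w := w) hd hxy' fun e he => by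
    rcases mem_insert.1 he with rfl | he
    · simp [hwa, hwb]
    · simp only [mem_erase] at he
      exact notMem_of_card_filter_le_two (hdeg w) ha hb hab' (by simp) (by simp) he.2.2 he.2.1
        he.1
  rw [hxy, erase_insert fun h => hg (mem_of_mem_erase (mem_of_mem_erase h))] at key
  have hTeq : insert s(w, y) (insert s(x, w) ((T.erase s(w, a)).erase s(w, b))) = T := by
    ext e
    rcases Sym2.eq_iff.1 hxy with ⟨rfl, rfl⟩ | ⟨rfl, rfl⟩ <;>
    · simp only [mem_insert, mem_erase, Sym2.eq_swap (a := x) (b := w)]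
      constructor
      · rintro (rfl | rfl | ⟨-, -, he⟩) <;> assumption
      · tauto
  exact ⟨_, hTeq ▸ key⟩

lemma exists_isInjOrientation_of_no_cherry
    (hT : ∀ w a b, s(w, a) ∈ T → s(w, b) ∈ T → a = b) {x y : V} (he : s(x, y) ∈ T)
    (ih : ∃ D, IsInjOrientation (T.erase s(x, y)) D) : ∃ D, IsInjOrientation T D := by
  obtain ⟨D, hD⟩ := ih
  have hx : ∀ f ∈ T.erase s(x, y), x ∉ f := by
    intro f hf hxf
    obtain ⟨u, rfl⟩ := Sym2.mem_iff_exists.1 hxf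
    obtain ⟨hne, hf⟩ := mem_erase.1 hf
    exact hne (by rw [hT x y u he hf])
  have hy : ∀ f ∈ T.erase s(x, y), y ∉ f := by
    intro f hf hyf
    obtain ⟨u, rfl⟩ := Sym2.mem_iff_exists.1 hyf
    obtain ⟨hne, hf⟩ := mem_erase.1 hf
    exact hne (by rw [hT y x u (Sym2.eq_swap ▸ he) hf, Sym2.eq_swap])
  exact ⟨_, insert_erase he ▸ hD.insert_dart (notMem_erase _ _) (hD.fst_notMem hx)
    (hD.snd_notMem hy)⟩

theorem exists_isInjOrientation (T : Finset (Sym2 V)) (hT : ∀ e ∈ T, ¬ e.IsDiag)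
    (hdeg : ∀ v, #{e ∈ T | v ∈ e} ≤ 2) : ∃ D, IsInjOrientation T D := by
  induction hn : #T using Nat.strong_induction_on generalizing T with
  | _ n ih =>
  subst hn
  have ih_sub : ∀ T' ⊆ T, #T' < #T → ∃ D, IsInjOrientation T' D := fun T' hT' hlt =>
    ih _ hlt T' (fun e he => hT e (hT' he))
      (fun v => (card_le_card (filter_subset_filter _ hT')).trans (hdeg v)) rfl
  by_cases hcherry : ∃ w a b, s(w, a) ∈ T ∧ s(w, b) ∈ T ∧ a ≠ b
  · obtain ⟨w, a, b, ha, hb, hab⟩ := hcherry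
    have hwa : w ≠ a := fun h => hT _ ha (by simp [h])
    have hwb : w ≠ b := fun h => hT _ hb (by simp [h])
    have hcard : #((T.erase s(w, a)).erase s(w, b)) + 2 = #T := by
      rw [← card_erase_add_one ha, ← card_erase_add_one (s := T.erase s(w, a))
        (mem_erase.2 ⟨fun h => hab (Sym2.congr_right.1 h).symm, hb⟩)]
    by_cases hg : s(a, b) ∈ T
    · refine exists_isInjOrientation_of_triangle hdeg hwa hwb hab ha hb hg (ih_sub _
        (fun e he => mem_of_mem_erase (mem_of_mem_erase (mem_of_mem_erase he))) ?_)
      have := card_erase_le (s := (T.erase s(w, a)).erase s(w, b)) (a := s(a, b))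
      omega
    · refine exists_isInjOrientation_of_cherry hdeg hwa hwb hab ha hb hg (ih _ ?_ _ ?_
        (fun v => (card_filter_contract_le ha hb v).trans (hdeg v)) rfl)
      · have := card_insert_le s(a, b) ((T.erase s(w, a)).erase s(w, b))
        omega
      · intro e he
        rcases mem_insert.1 he with rfl | he
        · simpa using hab
        · exact hT e (mem_of_mem_erase (mem_of_mem_erase he))
  · push Not at hcherry
    rcases T.eq_empty_or_nonempty with rfl | ⟨e, he⟩
    · exact ⟨∅, by simp [IsInjOrientation]⟩
    induction e using Sym2.ind with
    | _ x y =>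
      exact exists_isInjOrientation_of_no_cherry hcherry he
        (ih_sub _ (erase_subset _ _) (card_erase_lt_of_mem he))

theorem SimpleGraph.Coloring.exists_edgeColoring {α : Type*} {G : SimpleGraph V} (c : G.Coloring α)
    (hT : ↑T ⊆ G.edgeSet) (hdeg : ∀ v, #{e ∈ T | v ∈ e} ≤ 2) :
    ∃ χ : Sym2 V → α, ∀ e ∈ T, ∀ f ∈ T, e ≠ f → ∀ v ∈ e, v ∈ f → χ e ≠ χ f := by
  obtain ⟨D, hD⟩ := exists_isInjOrientation T (fun e he => G.not_isDiag_of_mem_edgeSet (hT he))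
    hdeg
  have : ∀ e, ∃ d : V × V, e ∈ T → d ∈ D ∧ s(d.1, d.2) = e := fun e =>
    if he : e ∈ T then
      let ⟨d, hd, hde⟩ := mem_image.1 (hD.1 ▸ he)
      ⟨d, fun _ => ⟨hd, hde⟩⟩
    else ⟨Quot.out e, fun h => absurd h he⟩
  choose d hd using this
  have hadj : ∀ f ∈ T, c (d f).1 ≠ c (d f).2 := fun f hf => c.valid (by
    have := hT hf
    rwa [← (hd f hf).2] at this)
  refine ⟨fun e => c (d e).2, fun e he f hf hef v hve hvf => ?_⟩
  show c (d e).2 ≠ c (d f).2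
  have hdef : d e ≠ d f := fun h => hef (by rw [← (hd e he).2, ← (hd f hf).2, h])
  rw [← (hd e he).2, Sym2.mem_iff] at hve
  rw [← (hd f hf).2, Sym2.mem_iff] at hvf
  rcases hve with h₁ | h₁ <;> rcases hvf with h₂ | h₂
  · exact absurd (hD.2.2.1 (hd e he).1 (hd f hf).1 (h₁.symm.trans h₂)) hdef
  · rw [← h₂, h₁]
    exact (hadj e he).symm
  · rw [← h₁, h₂]
    exact hadj f hf
  · exact absurd (hD.2.2.2 (hd e he).1 (hd f hf).1 (h₁.symm.trans h₂)) hdef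

end Orientation

section Lift

variable {V : Type*} {G : SimpleGraph V} {H : SimpleGraph (V × Bool)}

lemma Sym2.exists_mem_of_mem_map_fst {f : Sym2 (V × Bool)} {x : V}
    (hx : x ∈ f.map Prod.fst) : ∃ b, (x, b) ∈ f := by
  obtain ⟨⟨y, b⟩, hy, rfl⟩ := Sym2.mem_map.1 hx
  exact ⟨b, hy⟩

namespace IsTwoLift

variable (hH : IsTwoLift G H)
include hH

lemma adj_iff {u v : V} {i j : Bool} :
    H.Adj (u, i) (v, j) ↔ G.Adj u v ∧ j = xor i (decide (H.Adj (u, false) (v, true))) := by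
  by_cases huv : G.Adj u v
  · rcases hH.2 u v huv with ⟨h₁, h₂, h₃, h₄⟩ | ⟨h₁, h₂, h₃, h₄⟩ <;> cases i <;> cases j <;>
      simp [*]
  · simp [huv, hH.1 u v huv i j]

lemma map_fst_mem_edgeSet {f : Sym2 (V × Bool)} (hf : f ∈ H.edgeSet) :
    f.map Prod.fst ∈ G.edgeSet := by
  induction f using Sym2.ind with
  | _ p q => exact (hH.adj_iff.1 hf).1

lemma eq_mk_of_mem {f : Sym2 (V × Bool)} (hf : f ∈ H.edgeSet) {x y : V} {b : Bool}
    (hx : (x, b) ∈ f) (hy : f.map Prod.fst = s(x, y)) :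
    f = s((x, b), (y, xor b (decide (H.Adj (x, false) (y, true))))) := by
  obtain ⟨⟨u, c⟩, rfl⟩ := Sym2.mem_iff_exists.1 hx
  obtain rfl := Sym2.congr_right.1 (by simpa using hy)
  rw [(hH.adj_iff.1 hf).2]

lemma eq_of_mem_of_mem {f g : Sym2 (V × Bool)} (hf : f ∈ H.edgeSet) (hg : g ∈ H.edgeSet)
    (hfg : f.map Prod.fst = g.map Prod.fst) {p : V × Bool} (hpf : p ∈ f) (hpg : p ∈ g) :
    f = g := by
  obtain ⟨y, hy⟩ := Sym2.mem_iff_exists.1 (Sym2.mem_map.2 ⟨p, hpf, rfl⟩)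
  rw [hH.eq_mk_of_mem hf hpf hy, hH.eq_mk_of_mem hg hpg (hfg ▸ hy)]

lemma layer_unique {f : Sym2 (V × Bool)} (hf : f ∈ H.edgeSet) {x : V} {b c : Bool}
    (hb : (x, b) ∈ f) (hc : (x, c) ∈ f) : b = c := by
  obtain ⟨q, rfl⟩ := Sym2.mem_iff_exists.1 hb
  rcases Sym2.mem_iff.1 hc with h | rfl
  · exact (Prod.ext_iff.1 h).2.symm
  · exact absurd (hH.adj_iff.1 hf).1 G.irrefl

lemma mk_mem_iff {f : Sym2 (V × Bool)} (hf : f ∈ H.edgeSet) {x : V} {b c : Bool}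
    (hb : (x, b) ∈ f) : (x, c) ∈ f ↔ c = b :=
  ⟨fun hc => hH.layer_unique hf hc hb, fun h => h ▸ hb⟩

lemma eq_iff_of_mem {f g : Sym2 (V × Bool)} (hf : f ∈ H.edgeSet) (hg : g ∈ H.edgeSet)
    (hfg : f.map Prod.fst = g.map Prod.fst) {x : V} {b c : Bool} (hb : (x, b) ∈ f)
    (hc : (x, c) ∈ g) : f = g ↔ b = c :=
  ⟨fun h => hH.layer_unique hf hb (h ▸ hc), fun h => hH.eq_of_mem_of_mem hf hg hfg hb (h ▸ hc)⟩

lemma mk_xor_mem_iff {f g : Sym2 (V × Bool)} (hf : f ∈ H.edgeSet) (hg : g ∈ H.edgeSet)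
    (hfg : f.map Prod.fst = g.map Prod.fst) {p : V × Bool} (hp : p ∈ f) (b : Bool) :
    (p.1, xor p.2 b) ∈ g ↔ (g = f ↔ b = false) := by
  obtain ⟨c, hc⟩ := Sym2.exists_mem_of_mem_map_fst (hfg ▸ Sym2.mem_map.2 ⟨p, hp, rfl⟩)
  rw [hH.mk_mem_iff hg hc, hH.eq_iff_of_mem hg hf hfg.symm hc hp]
  cases b <;> cases c <;> cases p.2 <;> decide

lemma exists_mem_edgeSet {e : Sym2 V} (he : e ∈ G.edgeSet) {x : V} (hx : x ∈ e) (b : Bool) :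
    ∃ f ∈ H.edgeSet, f.map Prod.fst = e ∧ (x, b) ∈ f := by
  obtain ⟨y, rfl⟩ := Sym2.mem_iff_exists.1 hx
  exact ⟨s((x, b), (y, xor b (decide (H.Adj (x, false) (y, true))))),
    hH.adj_iff.2 ⟨he, rfl⟩, rfl, Sym2.mem_mk_left _ _⟩

end IsTwoLift

end Lift

section Selector

variable {V : Type*} {G : SimpleGraph V} {H : SimpleGraph (V × Bool)}

lemma IsMatchingF.snd_ne {N : Finset (Sym2 (V × Bool))} (hN : IsMatchingF H N)
    {f g : Sym2 (V × Bool)} (hf : f ∈ N) (hg : g ∈ N) (hfg : f ≠ g) {x : V} {b c : Bool}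
    (hb : (x, b) ∈ f) (hc : (x, c) ∈ g) : b ≠ c := by
  rintro rfl
  exact hN.2 f hf g hg hfg _ hb hc

lemma IsMatchingF.card_filter_image_le_two {N : Finset (Sym2 (V × Bool))}
    (hN : IsMatchingF H N) (v : V) : #{e ∈ N.image (Sym2.map Prod.fst) | v ∈ e} ≤ 2 := by
  rw [filter_image]
  refine card_image_le.trans ((card_le_card_of_injOn (fun f => decide ((v, true) ∈ f))
    (fun _ _ => mem_univ _) ?_).trans (by simp))
  intro f hf g hg hfg
  simp only [coe_filter, Set.mem_ofPred_eq] at hf hg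
  by_contra hne
  have shared : ∀ {p}, p ∈ f → p ∈ g → False := fun hp hq => hN.2 f hf.1 g hg.1 hne _ hp hq
  by_cases h : (v, true) ∈ f
  · exact shared h (by simpa [h] using hfg)
  · obtain ⟨b, hb⟩ := Sym2.exists_mem_of_mem_map_fst hf.2
    obtain ⟨c, hc⟩ := Sym2.exists_mem_of_mem_map_fst hg.2
    have hg' : (v, true) ∉ g := by simpa [h] using hfg
    cases b <;> cases c <;> simp_all

lemma IsTwoLift.eq_iff_eq_iff_ne (hH : IsTwoLift G H) {N N' : Finset (Sym2 (V × Bool))}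
    (hN : IsMatchingF H N) (hN' : IsMatchingF H N') {f g f₀ g₀ : Sym2 (V × Bool)} (hf : f ∈ N')
    (hg : g ∈ N') (hfg : f ≠ g) (hf₀ : f₀ ∈ N) (hg₀ : g₀ ∈ N)
    (hf₀f : f₀.map Prod.fst = f.map Prod.fst) (hg₀g : g₀.map Prod.fst = g.map Prod.fst) {v : V}
    (hvf : v ∈ f.map Prod.fst) (hvg : v ∈ g.map Prod.fst) : (f = f₀ ↔ g = g₀) ↔ f₀ ≠ g₀ := by
  obtain ⟨b, hb⟩ := Sym2.exists_mem_of_mem_map_fst hvf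
  obtain ⟨b', hb'⟩ := Sym2.exists_mem_of_mem_map_fst hvg
  obtain ⟨a, ha⟩ := Sym2.exists_mem_of_mem_map_fst (hf₀f ▸ hvf)
  obtain ⟨a', ha'⟩ := Sym2.exists_mem_of_mem_map_fst (hg₀g ▸ hvg)
  have hne : f₀ ≠ g₀ ↔ a ≠ a' := ⟨fun h => hN.snd_ne hf₀ hg₀ h ha ha',
    fun h h' => h (hH.layer_unique (hN.1 hg₀) (h' ▸ ha) ha')⟩
  rw [hH.eq_iff_of_mem (hN'.1 hf) (hN.1 hf₀) hf₀f.symm hb ha,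
    hH.eq_iff_of_mem (hN'.1 hg) (hN.1 hg₀) hg₀g.symm hb' ha', hne]
  have := hN'.snd_ne hf hg hfg hb hb'
  revert this
  cases b <;> cases b' <;> cases a <;> cases a' <;> decide

/-- `ρ e` is a reference copy of an endpoint of `e`: a lift of `e` is labelled by whether it
passes through `ρ e`. -/
def IsProperSelector (H : SimpleGraph (V × Bool)) (T : Finset (Sym2 V))
    (ρ : Sym2 V → V × Bool) : Prop :=
  (∀ e ∈ T, (ρ e).1 ∈ e) ∧
  ∀ N, IsMatchingF H N → N.image (Sym2.map Prod.fst) = T →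
    ∀ f ∈ N, ∀ g ∈ N, f ≠ g → ∀ v ∈ f.map Prod.fst, v ∈ g.map Prod.fst →
      (ρ (f.map Prod.fst) ∈ f ↔ ρ (g.map Prod.fst) ∉ g)

lemma IsTwoLift.isProperSelector_of_matching (hH : IsTwoLift G H) {N : Finset (Sym2 (V × Bool))}
    (hN : IsMatchingF H N) {χ : Sym2 V → Bool}
    (hχ : ∀ e ∈ N.image (Sym2.map Prod.fst), ∀ e' ∈ N.image (Sym2.map Prod.fst), e ≠ e' →
      ∀ v ∈ e, v ∈ e' → χ e ≠ χ e')
    {f₀ : Sym2 V → Sym2 (V × Bool)}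
    (hf₀ : ∀ e ∈ N.image (Sym2.map Prod.fst), f₀ e ∈ N ∧ (f₀ e).map Prod.fst = e) :
    IsProperSelector H (N.image (Sym2.map Prod.fst))
      (fun e => ((f₀ e).out.1.1, xor (f₀ e).out.1.2 (χ e))) := by
  refine ⟨fun e he => ?_, fun N' hN' hN'T f hf g hg hfg v hvf hvg => ?_⟩
  · have hp : (f₀ e).out.1.1 ∈ (f₀ e).map Prod.fst :=
      Sym2.mem_map.2 ⟨_, Sym2.out_fst_mem _, rfl⟩
    rwa [(hf₀ e he).2] at hp
  have he : f.map Prod.fst ∈ N.image (Sym2.map Prod.fst) := hN'T ▸ mem_image_of_mem _ hf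
  have he' : g.map Prod.fst ∈ N.image (Sym2.map Prod.fst) := hN'T ▸ mem_image_of_mem _ hg
  rw [hH.mk_xor_mem_iff (hN.1 (hf₀ _ he).1) (hN'.1 hf) (hf₀ _ he).2 (Sym2.out_fst_mem _),
    hH.mk_xor_mem_iff (hN.1 (hf₀ _ he').1) (hN'.1 hg) (hf₀ _ he').2 (Sym2.out_fst_mem _)]
  have hδ := hH.eq_iff_eq_iff_ne hN hN' hf hg hfg (hf₀ _ he).1 (hf₀ _ he').1 (hf₀ _ he).2
    (hf₀ _ he').2 hvf hvg
  by_cases hfg' : f.map Prod.fst = g.map Prod.fst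
  · rw [hfg'] at hδ ⊢
    simp only [ne_eq, not_true_eq_false, iff_false] at hδ
    tauto
  · have hχχ : χ (f.map Prod.fst) = false ↔ ¬ χ (g.map Prod.fst) = false := by
      have := hχ _ he _ he' hfg' v hvf hvg
      revert this
      cases χ (f.map Prod.fst) <;> cases χ (g.map Prod.fst) <;> decide
    have : f₀ (f.map Prod.fst) ≠ f₀ (g.map Prod.fst) := fun h =>
      hfg' (by rw [← (hf₀ _ he).2, ← (hf₀ _ he').2, h])
    tauto

theorem IsTwoLift.exists_isProperSelector (hH : IsTwoLift G H) (c : G.Coloring Bool)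
    (T : Finset (Sym2 V)) : ∃ ρ, IsProperSelector H T ρ := by
  by_cases hT : ∃ N, IsMatchingF H N ∧ N.image (Sym2.map Prod.fst) = T
  swap
  · exact ⟨fun e => (e.out.1, false), fun e _ => Sym2.out_fst_mem e,
      fun N hN hNT => absurd ⟨N, hN, hNT⟩ hT⟩
  obtain ⟨N, hN, rfl⟩ := hT
  obtain ⟨χ, hχ⟩ := c.exists_edgeColoring (T := N.image (Sym2.map Prod.fst))
    (fun _ he => by
      obtain ⟨f, hf, rfl⟩ := mem_image.1 he
      exact hH.map_fst_mem_edgeSet (hN.1 hf))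
    hN.card_filter_image_le_two
  have : ∀ e, ∃ f : Sym2 (V × Bool), e ∈ N.image (Sym2.map Prod.fst) →
      f ∈ N ∧ f.map Prod.fst = e := fun e =>
    if he : e ∈ N.image (Sym2.map Prod.fst) then
      let ⟨f, hf, hfe⟩ := mem_image.1 he
      ⟨f, fun _ => ⟨hf, hfe⟩⟩
    else ⟨e.map (·, false), fun h => absurd h he⟩
  choose f₀ hf₀ using this
  exact ⟨_, hH.isProperSelector_of_matching hN hχ hf₀⟩

theorem IsTwoLift.exists_forall_isProperSelector (hH : IsTwoLift G H) (hG : G.Colorable 2) :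
    ∃ ρ : Finset (Sym2 V) → Sym2 V → V × Bool, ∀ T, IsProperSelector H T (ρ T) := by
  obtain ⟨c⟩ := hG
  choose ρ hρ using hH.exists_isProperSelector (SimpleGraph.recolorOfEquiv G finTwoEquiv c)
  exact ⟨ρ, hρ⟩

end Selector

section Halves

variable {V : Type*} {G : SimpleGraph V} {H : SimpleGraph (V × Bool)}
  {ρ : Finset (Sym2 V) → Sym2 V → V × Bool}

def halfLabel (ρ : Finset (Sym2 V) → Sym2 V → V × Bool) (N : Finset (Sym2 (V × Bool)))
    (f : Sym2 (V × Bool)) : Bool :=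
  decide (ρ (N.image (Sym2.map Prod.fst)) (f.map Prod.fst) ∈ f)

def half (ρ : Finset (Sym2 V) → Sym2 V → V × Bool) (N : Finset (Sym2 (V × Bool))) (b : Bool) :
    Finset (Sym2 V) :=
  {f ∈ N | halfLabel ρ N f = b}.image (Sym2.map Prod.fst)

lemma half_union (N : Finset (Sym2 (V × Bool))) :
    half ρ N false ∪ half ρ N true = N.image (Sym2.map Prod.fst) := by
  rw [half, half, ← image_union, ← filter_or]
  simp

variable (hρ : ∀ T, IsProperSelector H T (ρ T)) {N : Finset (Sym2 (V × Bool))}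
  (hN : IsMatchingF H N)
include hρ hN

lemma halfLabel_ne {f g : Sym2 (V × Bool)} (hf : f ∈ N) (hg : g ∈ N) (hfg : f ≠ g) {v : V}
    (hvf : v ∈ f.map Prod.fst) (hvg : v ∈ g.map Prod.fst) :
    halfLabel ρ N f ≠ halfLabel ρ N g := by
  have := (hρ _).2 N hN rfl f hf g hg hfg v hvf hvg
  unfold halfLabel
  by_cases h : ρ (N.image (Sym2.map Prod.fst)) (f.map Prod.fst) ∈ f <;> simp_all

lemma injOn_map_fst_halfLabel (b : Bool) :
    Set.InjOn (Sym2.map Prod.fst) (({f ∈ N | halfLabel ρ N f = b} : Finset (Sym2 (V × Bool))) :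
      Set (Sym2 (V × Bool))) := by
  intro f hf g hg hfg
  simp only [coe_filter, Set.mem_ofPred_eq] at hf hg
  by_contra hne
  exact halfLabel_ne hρ hN hf.1 hg.1 hne (Sym2.out_fst_mem _) (hfg ▸ Sym2.out_fst_mem _)
    (hf.2.trans hg.2.symm)

lemma isMatchingF_half (hH : IsTwoLift G H) (b : Bool) : IsMatchingF G (half ρ N b) := by
  refine ⟨fun e he => ?_, fun e he e' he' hee' v hve hve' => ?_⟩
  · obtain ⟨f, hf, rfl⟩ := mem_image.1 he
    exact hH.map_fst_mem_edgeSet (hN.1 (mem_filter.1 hf).1)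
  · obtain ⟨f, hf, rfl⟩ := mem_image.1 he
    obtain ⟨g, hg, rfl⟩ := mem_image.1 he'
    rw [mem_filter] at hf hg
    exact halfLabel_ne hρ hN hf.1 hg.1 (fun h => hee' (h ▸ rfl)) hve hve' (hf.2.trans hg.2.symm)

lemma card_half_add_card_half : #(half ρ N false) + #(half ρ N true) = #N := by
  rw [half, half, card_image_of_injOn (injOn_map_fst_halfLabel hρ hN false),
    card_image_of_injOn (injOn_map_fst_halfLabel hρ hN true), add_comm]
  simpa using card_filter_add_card_filter_not (s := N) (fun f => halfLabel ρ N f = true)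

lemma prod_half_mul_prod_half {M : Type*} [CommMonoid M] (θ : Sym2 V → M) :
    (∏ e ∈ half ρ N false, θ e) * (∏ e ∈ half ρ N true, θ e) =
      ∏ f ∈ N, θ (f.map Prod.fst) := by
  rw [half, half, prod_image (injOn_map_fst_halfLabel hρ hN false),
    prod_image (injOn_map_fst_halfLabel hρ hN true), mul_comm]
  simpa using prod_filter_mul_prod_filter_not N (fun f => halfLabel ρ N f = true)
    (fun f => θ (f.map Prod.fst))

lemma subset_of_half_eq (hH : IsTwoLift G H) {N' : Finset (Sym2 (V × Bool))}
    (hN' : IsMatchingF H N') (h : ∀ b, half ρ N b = half ρ N' b) : N ⊆ N' := by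
  intro f hf
  have hT : N.image (Sym2.map Prod.fst) = N'.image (Sym2.map Prod.fst) := by
    rw [← half_union, ← half_union, h, h]
  have hf' : f.map Prod.fst ∈ half ρ N' (halfLabel ρ N f) :=
    h _ ▸ mem_image_of_mem _ (mem_filter.2 ⟨hf, rfl⟩)
  obtain ⟨g, hg, hgf⟩ := mem_image.1 hf'
  rw [mem_filter] at hg
  suffices f = g from this ▸ hg.1
  set r := ρ (N.image (Sym2.map Prod.fst)) (f.map Prod.fst)
  have hlabel : r ∈ f ↔ r ∈ g := by simpa [halfLabel, ← hT, hgf, r] using hg.2.symm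
  have hr : r.1 ∈ f.map Prod.fst := (hρ _).1 _ (mem_image_of_mem _ hf)
  obtain ⟨b, hb⟩ := Sym2.exists_mem_of_mem_map_fst hr
  obtain ⟨b', hb'⟩ := Sym2.exists_mem_of_mem_map_fst (hgf ▸ hr)
  rw [hH.eq_iff_of_mem (hN.1 hf) (hN'.1 hg.1) hgf.symm hb hb']
  rw [← Prod.mk.eta (p := r), hH.mk_mem_iff (hN.1 hf) hb, hH.mk_mem_iff (hN'.1 hg.1) hb'] at hlabel
  cases b <;> cases b' <;> cases h : r.2 <;> simp_all

omit hN in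
lemma injOn_halves (hH : IsTwoLift G H) :
    Set.InjOn (fun N => (half ρ N false, half ρ N true)) {N | IsMatchingF H N} := by
  intro N hN N' hN' h
  simp only [Prod.mk.injEq] at h
  have hhalf : ∀ b, half ρ N b = half ρ N' b := by
    intro b; cases b; exacts [h.1, h.2]
  exact (subset_of_half_eq hρ hN hH hN' hhalf).antisymm
    (subset_of_half_eq hρ hN' hH hN fun b => (hhalf b).symm)

end Halves

section MatchingLift

variable {V : Type*} [Fintype V] {G : SimpleGraph V} {H : SimpleGraph (V × Bool)}

lemma mem_edgeFS {W : Type*} [Fintype W] {K : SimpleGraph W} {e : Sym2 W} :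
    e ∈ edgeFS K ↔ e ∈ K.edgeSet :=
  Set.Finite.mem_toFinset _

lemma IsTwoLift.card_fiber (hH : IsTwoLift G H) {e : Sym2 V} (he : e ∈ G.edgeSet) :
    #{f ∈ edgeFS H | f.map Prod.fst = e} = 2 := by
  obtain ⟨f₀, hf₀, hf₀e, h₀⟩ := hH.exists_mem_edgeSet he (Sym2.out_fst_mem e) false
  obtain ⟨f₁, hf₁, hf₁e, h₁⟩ := hH.exists_mem_edgeSet he (Sym2.out_fst_mem e) true
  have hne : f₀ ≠ f₁ := fun h => Bool.false_ne_true (hH.layer_unique hf₁ (h ▸ h₀) h₁)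
  convert card_pair hne
  ext g
  simp only [mem_filter, mem_edgeFS, mem_insert, mem_singleton]
  constructor
  · rintro ⟨hg, rfl⟩
    obtain ⟨b, hb⟩ := Sym2.exists_mem_of_mem_map_fst (Sym2.out_fst_mem (g.map Prod.fst))
    cases b
    · exact Or.inl (hH.eq_of_mem_of_mem hg hf₀ hf₀e.symm hb h₀)
    · exact Or.inr (hH.eq_of_mem_of_mem hg hf₁ hf₁e.symm hb h₁)
  · rintro (rfl | rfl) <;> simp_all

lemma IsTwoLift.exists_isMatchingF_card_eq (hH : IsTwoLift G H) {M : Finset (Sym2 V)}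
    (hM : IsMatchingF G M) : ∃ N, IsMatchingF H N ∧ #N = 2 * #M := by
  refine ⟨{f ∈ edgeFS H | f.map Prod.fst ∈ M}, ⟨fun f hf => mem_edgeFS.1 (mem_filter.1 hf).1, ?_⟩,
    ?_⟩
  · intro f hf g hg hfg p hpf hpg
    rw [mem_filter, mem_edgeFS] at hf hg
    by_cases he : f.map Prod.fst = g.map Prod.fst
    · exact hfg (hH.eq_of_mem_of_mem hf.1 hg.1 he hpf hpg)
    · exact hM.2 _ hf.2 _ hg.2 he p.1 (Sym2.mem_map.2 ⟨p, hpf, rfl⟩)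
        (Sym2.mem_map.2 ⟨p, hpg, rfl⟩)
  · rw [card_eq_sum_card_fiberwise (f := Sym2.map Prod.fst)
      (s := {f ∈ edgeFS H | f.map Prod.fst ∈ M}) (t := M) (fun f hf => (mem_filter.1 hf).2),
      mul_comm, ← smul_eq_mul, ← sum_const]
    refine sum_congr rfl fun e he => ?_
    rw [filter_filter, ← hH.card_fiber (hM.1 he)]
    congr 1
    ext f
    simp +contextual only [mem_filter, and_congr_right_iff, and_iff_right_iff_imp]
    exact fun _ h => h ▸ he


theorem IsTwoLift.PW_le_sq (hH : IsTwoLift G H) (hG : G.Colorable 2)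
    {θ : Sym2 V → ℝ} (hθ : ∀ e ∈ G.edgeSet, 0 < θ e) {z : ℝ} (hz : 0 ≤ z) :
    PW H (fun f => θ (f.map Prod.fst)) z ≤ PW G θ z ^ 2 := by
  obtain ⟨ρ, hρ⟩ := hH.exists_forall_isProperSelector hG
  let w : Finset (Sym2 V) → ℝ := fun M => (∏ e ∈ M, θ e) * z ^ #M
  have hsplit : ∀ N ∈ univ.filter (IsMatchingF H),
      (∏ f ∈ N, θ (f.map Prod.fst)) * z ^ #N = w (half ρ N false) * w (half ρ N true) := by
    intro N hN
    rw [mem_filter] at hN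
    rw [← card_half_add_card_half hρ hN.2, ← prod_half_mul_prod_half hρ hN.2, pow_add]
    ring
  have hinj := (injOn_halves hρ hH).mono (s₁ := (univ.filter (IsMatchingF H) : Finset _))
    (by simp)
  rw [PW_eq_sum (fun f hf => hθ _ (hH.map_fst_mem_edgeSet hf)), PW_eq_sum hθ, sq, sum_mul_sum,
    ← sum_product', sum_congr rfl hsplit, ← sum_image (f := fun P => w P.1 * w P.2) hinj]
  refine sum_le_sum_of_subset_of_nonneg (fun P hP => ?_) fun P hP _ => ?_
  · obtain ⟨N, hN, rfl⟩ := mem_image.1 hP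
    have hN := (mem_filter.1 hN).2
    simp [isMatchingF_half hρ hN hH]
  · simp only [mem_product, mem_filter, mem_univ, true_and] at hP
    have hw : ∀ M, IsMatchingF G M → 0 ≤ w M := fun M hM =>
      mul_nonneg (prod_pos_of_isMatchingF hθ hM).le (pow_nonneg hz _)
    exact mul_nonneg (hw _ hP.1) (hw _ hP.2)

theorem IsTwoLift.nuW_eq (hH : IsTwoLift G H) (hG : G.Colorable 2) {θ : Sym2 V → ℝ}
    (hθ : ∀ e ∈ G.edgeSet, 0 < θ e) :
    nuW H (fun f => θ (f.map Prod.fst)) = 2 * nuW G θ := by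
  obtain ⟨ρ, hρ⟩ := hH.exists_forall_isProperSelector hG
  refine (isGreatest_nuW fun f hf => hθ _ (hH.map_fst_mem_edgeSet hf)).unique ⟨?_, ?_⟩
  · obtain ⟨M, hM, hMcard⟩ := (isGreatest_nuW hθ).1
    obtain ⟨N, hN, hNcard⟩ := hH.exists_isMatchingF_card_eq hM
    exact ⟨N, hN, by rw [hNcard, hMcard]⟩
  · rintro _ ⟨N, hN, rfl⟩
    rw [← card_half_add_card_half hρ hN, two_mul]
    exact add_le_add ((isGreatest_nuW hθ).2 ⟨_, isMatchingF_half hρ hN hH false, rfl⟩)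
      ((isGreatest_nuW hθ).2 ⟨_, isMatchingF_half hρ hN hH true, rfl⟩)

end MatchingLift

/-- For a finite bipartite weighted graph `G` and any 2-lift `H` of `G`
(with lifted weights `θ_H(e) = θ(π(e))`): `P_G(z)² ≥ P_H(z)` for all `z > 0`, and
`ν(H) = 2 ν(G)`. -/
theorem two_lift_partition_and_matching_number {V : Type*} [Fintype V] (G : SimpleGraph V)
    (hbip : G.Colorable 2) (θ : Sym2 V → ℝ) (hθ : ∀ e ∈ G.edgeSet, 0 < θ e)
    (H : SimpleGraph (V × Bool)) (hH : IsTwoLift G H) :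
    (∀ z : ℝ, 0 < z →
      PW G θ z ^ 2 ≥ PW H (fun e => θ (Sym2.map Prod.fst e)) z) ∧
    nuW H (fun e => θ (Sym2.map Prod.fst e)) = 2 * nuW G θ :=
  ⟨fun _ hz => hH.PW_le_sq hbip hθ hz.le, hH.nuW_eq hbip hθ⟩
end
end

section
/- Let G = (V,E) be a finite simple graph with positive edge weights (θ_e)_{e∈E}. Then for every z > 0 there exists a unique vector y(z) ∈ (0,∞)^{E⃗} satisfying y_{u→v}(z) = z / (1 + ∑_{w ∈ ∂u∖{v}} θ_{wu} y_{w→u}(z)) for every directed edge u→v. Moreover, for every directed edge u→v, the function z ↦ y_{u→v}(z) is monotone increasing on (0,∞) and the function z ↦ y_{u→v}(z)/z is monotone decreasing on (0,∞). -/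
open Finset
open scoped BigOperators Classical

noncomputable section

/-!
Write `F_z` for the message map `y ↦ (z / (1 + ∑_{w ∈ ∂u∖{v}} θ_{wu} y_{w→u}))_{u→v}`. It is
antitone, so `F_z ∘ F_z` is a monotone self-map of the complete lattice `[0, z]^{E⃗}` and has a
fixed point `y` by Knaster–Tarski; thus `(y, F_z y)` is a 2-cycle of `F_z`.

Everything else comes from one comparison. For 2-cycles `(a, a')` of `F_{z₁}` and `(b, b')` of
`F_{z₂}` with `z₁ ≤ z₂`, let `r` be the largest of the ratios `a/b`, `z₁ b / (z₂ a)`,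
`a'/b'`, `z₁ b' / (z₂ a')` over all directed edges. If `r > 1`, one application of the message map
turns these bounds into strict ones at every edge, which is absurd at an edge where `r` is
attained; so `r ≤ 1`. Comparing `(y, F_z y)` with `(F_z y, y)` shows that `y` is a fixed point;
comparing two fixed points gives uniqueness (`z₁ = z₂`) and both monotonicity claims.
-/

theorem Finset.forall_le_of_forall_lt_of_forall_le {ι α : Type*} [LinearOrder α] (s : Finset ι)
    (ρ : ι → α) (c : α) (h : ∀ r, c < r → (∀ i ∈ s, ρ i ≤ r) → ∀ i ∈ s, ρ i < r) :
    ∀ i ∈ s, ρ i ≤ c := by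
  by_contra! ⟨i, hi, hci⟩
  obtain ⟨j, hj, hmax⟩ := s.exists_mem_eq_sup' ⟨i, hi⟩ ρ
  have hbound : ∀ k ∈ s, ρ k ≤ s.sup' ⟨i, hi⟩ ρ := fun k hk => s.le_sup' ρ hk
  have hc : c < s.sup' ⟨i, hi⟩ ρ := hci.trans_le (hbound i hi)
  exact (h _ hc hbound j hj).ne hmax.symm

/-- `cmpRatio z₁ z₂ a b ≤ 1` says `a ≤ b ≤ (z₂ / z₁) a`, the comparison expected between the
messages at `z₁ ≤ z₂`. -/
def cmpRatio (z₁ z₂ a b : ℝ) : ℝ :=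
  max (a / b) (z₁ * b / (z₂ * a))

section cmpRatio

variable {z₁ z₂ a b r : ℝ}

theorem cmpRatio_le_iff (hz₂ : 0 < z₂) (ha : 0 < a) (hb : 0 < b) :
    cmpRatio z₁ z₂ a b ≤ r ↔ a ≤ r * b ∧ z₁ * b ≤ r * (z₂ * a) := by
  rw [cmpRatio, max_le_iff, div_le_iff₀ hb, div_le_iff₀ (mul_pos hz₂ ha)]

theorem cmpRatio_le_one_iff (hz₂ : 0 < z₂) (ha : 0 < a) (hb : 0 < b) :
    cmpRatio z₁ z₂ a b ≤ 1 ↔ a ≤ b ∧ z₁ * b ≤ z₂ * a := by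
  simp only [cmpRatio_le_iff hz₂ ha hb, one_mul]

theorem cmpRatio_div_lt {S T : ℝ} (hz₁ : 0 < z₁) (hz : z₁ ≤ z₂) (hr : 1 < r) (hS : 0 ≤ S)
    (hT : 0 ≤ T) (hST : S ≤ r * T) (hTS : z₁ * T ≤ r * (z₂ * S)) :
    cmpRatio z₁ z₂ (z₁ / (1 + S)) (z₂ / (1 + T)) < r := by
  have hz₂ : 0 < z₂ := hz₁.trans_le hz
  have hratio : cmpRatio z₁ z₂ (z₁ / (1 + S)) (z₂ / (1 + T))
      = max (z₁ * (1 + T) / (z₂ * (1 + S))) ((1 + S) / (1 + T)) := by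
    rw [cmpRatio]
    congr 1 <;> field_simp
  have hz : z₁ < r * z₂ := hz.trans_lt (lt_mul_of_one_lt_left hz₂ hr)
  rw [hratio, max_lt_iff, div_lt_iff₀ (by positivity), div_lt_iff₀ (by positivity)]
  constructor <;> linarith

end cmpRatio

section MessageMap

variable {V : Type*} [Fintype V] (G : SimpleGraph V) (θ : Sym2 V → ℝ)

def msgSum (y : V × V → ℝ) (u v : V) : ℝ :=
  ∑ w ∈ (nbrFS G u).erase v, θ s(w, u) * y (w, u)

def msgMap (z : ℝ) (y : V × V → ℝ) : V × V → ℝ :=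
  fun p => z / (1 + msgSum G θ y p.1 p.2)

def MsgStep (z : ℝ) (x y : V × V → ℝ) : Prop :=
  ∀ u v : V, G.Adj u v → 0 < y (u, v) ∧ y (u, v) = msgMap G θ z x (u, v)

variable {G θ}

theorem msgFP_iff_msgStep {z : ℝ} {y : V × V → ℝ} : MsgFP G θ z y ↔ MsgStep G θ z y y :=
  Iff.rfl

theorem adj_of_mem_erase_nbrFS {u v w : V} (h : w ∈ (nbrFS G u).erase v) : G.Adj w u := by
  simpa [nbrFS, SimpleGraph.adj_comm] using Finset.mem_of_mem_erase h

theorem msgSum_congr {x y : V × V → ℝ} (h : ∀ u v : V, G.Adj u v → x (u, v) = y (u, v))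
    (u v : V) : msgSum G θ x u v = msgSum G θ y u v :=
  Finset.sum_congr rfl fun _ hw => by rw [h _ _ (adj_of_mem_erase_nbrFS hw)]

section NonnegWeights

variable (hθ : ∀ e ∈ G.edgeSet, 0 ≤ θ e)
include hθ

theorem msgSum_nonneg {y : V × V → ℝ} (hy : ∀ u v : V, G.Adj u v → 0 ≤ y (u, v)) (u v : V) :
    0 ≤ msgSum G θ y u v := by
  refine Finset.sum_nonneg fun w hw => ?_
  have hwu := adj_of_mem_erase_nbrFS hw
  exact mul_nonneg (hθ _ hwu) (hy w u hwu)

theorem mul_msgSum_le_mul_msgSum {x y : V × V → ℝ} {c d : ℝ}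
    (h : ∀ u v : V, G.Adj u v → c * x (u, v) ≤ d * y (u, v)) (u v : V) :
    c * msgSum G θ x u v ≤ d * msgSum G θ y u v := by
  rw [msgSum, msgSum, Finset.mul_sum, Finset.mul_sum]
  refine Finset.sum_le_sum fun w hw => ?_
  have hwu := adj_of_mem_erase_nbrFS hw
  rw [mul_left_comm c, mul_left_comm d]
  exact mul_le_mul_of_nonneg_left (h w u hwu) (hθ _ hwu)

theorem msgMap_pos {z : ℝ} (hz : 0 < z) {y : V × V → ℝ}
    (hy : ∀ u v : V, G.Adj u v → 0 ≤ y (u, v)) (p : V × V) : 0 < msgMap G θ z y p :=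
  div_pos hz (by linarith [msgSum_nonneg hθ hy p.1 p.2])

theorem msgMap_mem_Icc {z : ℝ} (hz : 0 ≤ z) {y : V × V → ℝ}
    (hy : ∀ u v : V, G.Adj u v → 0 ≤ y (u, v)) (p : V × V) : msgMap G θ z y p ∈ Set.Icc 0 z :=
  have hS := msgSum_nonneg hθ hy p.1 p.2
  ⟨div_nonneg hz (by linarith), div_le_self hz (by linarith)⟩

theorem msgMap_anti {z : ℝ} (hz : 0 ≤ z) {x y : V × V → ℝ}
    (hx : ∀ u v : V, G.Adj u v → 0 ≤ x (u, v)) (hxy : ∀ u v : V, G.Adj u v → x (u, v) ≤ y (u, v))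
    (p : V × V) : msgMap G θ z y p ≤ msgMap G θ z x p := by
  have hS := msgSum_nonneg hθ hx p.1 p.2
  have hle : msgSum G θ x p.1 p.2 ≤ msgSum G θ y p.1 p.2 := by
    simpa using mul_msgSum_le_mul_msgSum hθ (c := 1) (d := 1) (by simpa using hxy) p.1 p.2
  exact div_le_div_of_nonneg_left hz (by linarith) (by linarith)

theorem MsgStep.cmpRatio_lt {z₁ z₂ r : ℝ} (hz₁ : 0 < z₁) (hz : z₁ ≤ z₂) (hr : 1 < r)
    {x y a b : V × V → ℝ} (hx : ∀ u v : V, G.Adj u v → 0 < x (u, v))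
    (hy : ∀ u v : V, G.Adj u v → 0 < y (u, v))
    (hxy : ∀ u v : V, G.Adj u v → cmpRatio z₁ z₂ (x (u, v)) (y (u, v)) ≤ r)
    (ha : MsgStep G θ z₁ x a) (hb : MsgStep G θ z₂ y b) {u v : V} (huv : G.Adj u v) :
    cmpRatio z₁ z₂ (a (u, v)) (b (u, v)) < r := by
  have hxy' := fun c d hcd =>
    (cmpRatio_le_iff (hz₁.trans_le hz) (hx c d hcd) (hy c d hcd)).1 (hxy c d hcd)
  rw [(ha u v huv).2, (hb u v huv).2]
  refine cmpRatio_div_lt hz₁ hz hr (msgSum_nonneg hθ (fun c d h => (hx c d h).le) u v)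
    (msgSum_nonneg hθ (fun c d h => (hy c d h).le) u v) ?_ ?_
  · simpa using mul_msgSum_le_mul_msgSum hθ (c := 1)
      (by simpa using fun c d h => (hxy' c d h).1) u v
  · simpa [mul_assoc] using mul_msgSum_le_mul_msgSum hθ (d := r * z₂)
      (by simpa [mul_assoc] using fun c d h => (hxy' c d h).2) u v

theorem cmpRatio_le_one_of_msgCycle {z₁ z₂ : ℝ} (hz₁ : 0 < z₁) (hz : z₁ ≤ z₂)
    {a a' b b' : V × V → ℝ} (ha : MsgStep G θ z₁ a' a) (ha' : MsgStep G θ z₁ a a')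
    (hb : MsgStep G θ z₂ b' b) (hb' : MsgStep G θ z₂ b b') {u v : V} (huv : G.Adj u v) :
    cmpRatio z₁ z₂ (a (u, v)) (b (u, v)) ≤ 1 ∧ cmpRatio z₁ z₂ (a' (u, v)) (b' (u, v)) ≤ 1 := by
  let ρ : V × V → ℝ := fun p => max (cmpRatio z₁ z₂ (a p) (b p)) (cmpRatio z₁ z₂ (a' p) (b' p))
  have pos {z : ℝ} {x y : V × V → ℝ} (h : MsgStep G θ z x y) c d (hcd : G.Adj c d) :=
    (h c d hcd).1
  suffices ∀ p ∈ Finset.univ.filter (fun p : V × V => G.Adj p.1 p.2), ρ p ≤ 1 from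
    max_le_iff.1 (this (u, v) (by simpa using huv))
  refine Finset.forall_le_of_forall_lt_of_forall_le _ ρ 1 fun r hr hρ => ?_
  have hρ' c d (hcd : G.Adj c d) := max_le_iff.1 (hρ (c, d) (by simpa using hcd))
  rintro ⟨c, d⟩ hcd
  replace hcd : G.Adj c d := by simpa using hcd
  exact max_lt
    (ha.cmpRatio_lt hθ hz₁ hz hr (pos ha') (pos hb') (fun c d h => (hρ' c d h).2) hb hcd)
    (ha'.cmpRatio_lt hθ hz₁ hz hr (pos ha) (pos hb) (fun c d h => (hρ' c d h).1) hb' hcd)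

theorem MsgFP.le_and_div_le {z₁ z₂ : ℝ} (hz₁ : 0 < z₁) (hz : z₁ ≤ z₂) {y₁ y₂ : V × V → ℝ}
    (h₁ : MsgFP G θ z₁ y₁) (h₂ : MsgFP G θ z₂ y₂) {u v : V} (huv : G.Adj u v) :
    y₁ (u, v) ≤ y₂ (u, v) ∧ y₂ (u, v) / z₂ ≤ y₁ (u, v) / z₁ := by
  have hz₂ : 0 < z₂ := hz₁.trans_le hz
  rw [msgFP_iff_msgStep] at h₁ h₂
  obtain ⟨hle, hmul⟩ := (cmpRatio_le_one_iff hz₂ (h₁ u v huv).1 (h₂ u v huv).1).1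
    (cmpRatio_le_one_of_msgCycle hθ hz₁ hz h₁ h₁ h₂ h₂ huv).1
  exact ⟨hle, by rw [div_le_div_iff₀ hz₂ hz₁]; linarith⟩

theorem exists_msgMap_msgMap_eq {z : ℝ} (hz : 0 ≤ z) :
    ∃ y : V × V → ℝ, (∀ p, 0 ≤ y p) ∧ msgMap G θ z (msgMap G θ z y) = y := by
  have : Fact (0 ≤ z) := ⟨hz⟩
  have nonneg (y : V × V → Set.Icc 0 z) (c d : V) (_ : G.Adj c d) : 0 ≤ (y (c, d) : ℝ) :=
    (y (c, d)).2.1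
  have map_nonneg (y : V × V → Set.Icc 0 z) (c d : V) (_ : G.Adj c d) :
      0 ≤ msgMap G θ z (fun q => y q) (c, d) :=
    (msgMap_mem_Icc hθ hz (nonneg y) (c, d)).1
  let T : (V × V → Set.Icc 0 z) →o (V × V → Set.Icc 0 z) :=
    { toFun := fun y p => ⟨_, msgMap_mem_Icc hθ hz (map_nonneg y) p⟩
      monotone' := fun y y' h p => msgMap_anti hθ hz (map_nonneg y')
        (fun c d _ => msgMap_anti hθ hz (nonneg y) (fun c d _ => h (c, d)) _) p }
  exact ⟨fun p => T.lfp p, fun p => (T.lfp p).2.1,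
    funext fun p => congrArg Subtype.val (congrFun T.map_lfp p)⟩

theorem exists_msgFP {z : ℝ} (hz : 0 < z) : ∃ y : V × V → ℝ, MsgFP G θ z y := by
  obtain ⟨y, hy, hcycle⟩ := exists_msgMap_msgMap_eq hθ hz.le
  set y' := msgMap G θ z y
  have hstep : MsgStep G θ z y y' := fun u v _ => ⟨msgMap_pos hθ hz (fun c d _ => hy _) _, rfl⟩
  have hstep' : MsgStep G θ z y' y := fun u v _ =>
    ⟨hcycle ▸ msgMap_pos hθ hz (fun c d h => (hstep c d h).1.le) _, by rw [hcycle]⟩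
  have heq (u v : V) (huv : G.Adj u v) : y' (u, v) = y (u, v) := by
    have hcmp := cmpRatio_le_one_of_msgCycle hθ hz le_rfl hstep' hstep hstep hstep' huv
    exact le_antisymm
      ((cmpRatio_le_one_iff hz (hstep u v huv).1 (hstep' u v huv).1).1 hcmp.2).1
      ((cmpRatio_le_one_iff hz (hstep' u v huv).1 (hstep u v huv).1).1 hcmp.1).1
  refine ⟨y, msgFP_iff_msgStep.2 fun u v huv => ⟨(hstep' u v huv).1, ?_⟩⟩
  rw [(hstep' u v huv).2, msgMap, msgMap, msgSum_congr heq]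

end NonnegWeights

end MessageMap

/-- For every `z > 0` the message recursion has a unique positive solution
on directed edges; moreover for each directed edge, `z ↦ y_{u→v}(z)` is monotone increasing
and `z ↦ y_{u→v}(z)/z` is monotone decreasing on `(0, ∞)`. -/
theorem message_fixed_point_exists_unique_monotone {V : Type*} [Fintype V]
    (G : SimpleGraph V) (θ : Sym2 V → ℝ) (hθ : ∀ e ∈ G.edgeSet, 0 < θ e) :
    ∃ y : ℝ → V × V → ℝ,
      (∀ z : ℝ, 0 < z → MsgFP G θ z (y z)) ∧
      (∀ z : ℝ, 0 < z → ∀ y' : V × V → ℝ, MsgFP G θ z y' →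
        ∀ u v : V, G.Adj u v → y' (u, v) = y z (u, v)) ∧
      (∀ u v : V, G.Adj u v → MonotoneOn (fun z => y z (u, v)) (Set.Ioi (0 : ℝ))) ∧
      (∀ u v : V, G.Adj u v → AntitoneOn (fun z => y z (u, v) / z) (Set.Ioi (0 : ℝ))) := by
  have hθ' : ∀ e ∈ G.edgeSet, 0 ≤ θ e := fun e he => (hθ e he).le
  have hex (z : ℝ) : ∃ y : V × V → ℝ, 0 < z → MsgFP G θ z y := by
    by_cases hz : 0 < z
    · exact (exists_msgFP hθ' hz).imp fun _ hy _ => hy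
    · exact ⟨0, fun h => absurd h hz⟩
  choose y hy using hex
  refine ⟨y, hy, fun z hz y' hy' u v huv => ?_, fun u v huv z₁ hz₁ z₂ _ h => ?_,
    fun u v huv z₁ hz₁ z₂ _ h => ?_⟩
  · exact le_antisymm (hy'.le_and_div_le hθ' hz le_rfl (hy z hz) huv).1
      ((hy z hz).le_and_div_le hθ' hz le_rfl hy' huv).1
  · exact ((hy z₁ hz₁).le_and_div_le hθ' hz₁ h (hy z₂ (hz₁.trans_le h)) huv).1
  · exact ((hy z₁ hz₁).le_and_div_le hθ' hz₁ h (hy z₂ (hz₁.trans_le h)) huv).2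
end
end

section
/- Let G = (V,E) be a finite simple graph with positive edge weights (θ_e)_{e∈E}, and for z > 0 let y(z) ∈ (0,∞)^{E⃗} be the unique solution of y_{u→v}(z) = z / (1 + ∑_{w ∈ ∂u∖{v}} θ_{wu} y_{w→u}(z)) for all directed edges u→v, and define x_e(z) = θ_e y_{u→v}(z) y_{v→u}(z) / (z + θ_e y_{u→v}(z) y_{v→u}(z)) for each edge e = (uv). Then for every z > 0 and every x ∈ FM(G), one has (∑_{e∈E} x_e) ln z + S^B_G(x) ≤ (∑_{e∈E} x_e(z)) ln z + S^B_G(x(z)); that is, x(z) maximizes x ↦ (∑_e x_e) ln z + S^B_G(x) over FM(G). -/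
open Finset
open scoped BigOperators Classical

noncomputable section

/-!
By the message equations, `q = x(z)` is an interior critical point of
`Φ(t) = (∑ₑ tₑ) ln z + S^B_G(t)`: writing `Qᵥ = ∑_{e ∋ v} qₑ`, every edge `e = uv` satisfies
`qₑ (1 - qₑ) = z θₑ (1 - Q_u) (1 - Q_v)`. Substituting this for `ln z + ln θₑ` gives, for
`t ∈ FM(G)` with vertex sums `Tᵥ`,
`Φ(t) - Φ(q) = ∑ₑ [tₑ ln (qₑ/tₑ) + (1 - tₑ) ln ((1 - tₑ)/(1 - qₑ))]`
`             - ∑ᵥ (1 - Tᵥ) ln ((1 - Tᵥ)/(1 - Qᵥ))`.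
Every edge has two endpoints, so it suffices that at each vertex the edge terms are at most twice
the vertex term. Completing `(tₑ)_{e ∋ v}` and `(qₑ)_{e ∋ v}` by their slacks to probability
vectors `P`, `Q`, this follows from `∑ᵢ (1 - Pᵢ) ln ((1 - Pᵢ)/(1 - Qᵢ)) ≤ KL(P ‖ Q)`, which holds
pointwise along the integral representation of the Bregman divergence of `x ln x`.
-/

open Real

lemma sub_le_mul_log_div {x y : ℝ} (hx : 0 ≤ x) (hy : 0 < y) : x - y ≤ x * log (x / y) := by
  rcases hx.eq_or_lt with rfl | hx
  · simpa using hy.le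
  · have h := mul_le_mul_of_nonneg_left (one_sub_inv_le_log_of_pos (div_pos hx hy)) hx.le
    rwa [inv_div, mul_sub, mul_one, mul_div_cancel₀ _ hx.ne'] at h

lemma mul_log_div_eq_sub {x y : ℝ} (hy : y ≠ 0) : x * log (x / y) = x * log x - x * log y := by
  rcases eq_or_ne x 0 with rfl | hx
  · simp
  · rw [log_div hx hy, mul_sub]

lemma mul_log_div_eq_sub' {x y : ℝ} (hy : y ≠ 0) : x * log (y / x) = x * log y - x * log x := by
  rw [← inv_div, log_inv, mul_neg, mul_log_div_eq_sub hy, neg_sub]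

lemma bernoulli_kl_nonneg {a b : ℝ} (ha₀ : 0 ≤ a) (ha₁ : a ≤ 1) (hb₀ : 0 < b) (hb₁ : b < 1) :
    0 ≤ a * log (a / b) + (1 - a) * log ((1 - a) / (1 - b)) := by
  linarith [sub_le_mul_log_div ha₀ hb₀, sub_le_mul_log_div (sub_nonneg.2 ha₁) (sub_pos.2 hb₁)]

lemma sum_mul_one_sub_div_le {ι : Type*} (s : Finset ι) (m : ι → ℝ) {σ : ℝ}
    (hm₀ : ∀ j ∈ s, 0 ≤ m j) (hσ : 2 * σ < 1) (hm : ∑ j ∈ s, m j = σ) :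
    ∑ j ∈ s, m j * (1 - m j) / (1 - 2 * m j) ≤ σ * (1 - σ) / (1 - 2 * σ) := by
  have hterm : ∀ j ∈ s, m j * (1 - m j) / (1 - 2 * m j) ≤ m j * ((1 - σ) / (1 - 2 * σ)) :=
    fun j hj => by
      have hle : m j ≤ σ := hm ▸ single_le_sum hm₀ hj
      rw [mul_div_assoc]
      gcongr ?_ * ?_
      · exact hm₀ j hj
      rw [div_le_div_iff₀ (by linarith) (by linarith)]
      nlinarith
  calc ∑ j ∈ s, m j * (1 - m j) / (1 - 2 * m j)
      ≤ ∑ j ∈ s, m j * ((1 - σ) / (1 - 2 * σ)) := sum_le_sum hterm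
    _ = σ * (1 - σ) / (1 - 2 * σ) := by rw [← sum_mul, hm, mul_div_assoc]

/-- At most one `mᵢ` exceeds `1/2`; its negative contribution `vᵢ² (1/mᵢ - 1/(1 - mᵢ))` is
absorbed by Cauchy–Schwarz (`vᵢ = -∑_{j ≠ i} vⱼ`) and `sum_mul_one_sub_div_le`. -/
lemma sum_sq_div_one_sub_le_sum_sq_div {ι : Type*} (t : Finset ι) (m v : ι → ℝ)
    (hm₀ : ∀ i ∈ t, 0 < m i) (hm₁ : ∀ i ∈ t, m i < 1)
    (hm : ∑ i ∈ t, m i = 1) (hv : ∑ i ∈ t, v i = 0) :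
    ∑ i ∈ t, v i ^ 2 / (1 - m i) ≤ ∑ i ∈ t, v i ^ 2 / m i := by
  by_cases hsmall : ∀ i ∈ t, m i ≤ 1 / 2
  · exact sum_le_sum fun i hi =>
      div_le_div_of_nonneg_left (sq_nonneg _) (hm₀ i hi) (by linarith [hsmall i hi])
  push Not at hsmall
  obtain ⟨i₀, hi₀, hbig⟩ := hsmall
  set s := t.erase i₀
  set σ := 1 - m i₀
  have hσ₀ : 0 < σ := by linarith [hm₁ i₀ hi₀]
  have hm_erase : ∀ j ∈ s, 0 < m j := fun j hj => hm₀ j (mem_of_mem_erase hj)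
  have hsum_m : ∑ j ∈ s, m j = σ := by linarith [add_sum_erase t m hi₀]
  have hsum_v : ∑ j ∈ s, v j = -v i₀ := by linarith [add_sum_erase t v hi₀]
  have hm_small : ∀ j ∈ s, 2 * m j < 1 := fun j hj => by
    linarith [hsum_m ▸ single_le_sum (fun k hk => (hm_erase k hk).le) hj]
  set w : ι → ℝ := fun j => m j * (1 - m j) / (1 - 2 * m j)
  have hw₀ : ∀ j ∈ s, 0 < w j := fun j hj =>
    div_pos (mul_pos (hm_erase j hj) (by linarith [hm_small j hj])) (by linarith [hm_small j hj])
  have hCS : v i₀ ^ 2 / (∑ j ∈ s, w j) ≤ ∑ j ∈ s, v j ^ 2 / w j := by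
    simpa [hsum_v] using sq_sum_div_le_sum_sq_div s v hw₀
  have hbound : v i₀ ^ 2 / (σ * (1 - σ) / (1 - 2 * σ)) ≤ v i₀ ^ 2 / ∑ j ∈ s, w j :=
    div_le_div_of_nonneg_left (sq_nonneg _)
      (sum_pos hw₀ (nonempty_of_sum_ne_zero (hsum_m ▸ hσ₀.ne')))
      (sum_mul_one_sub_div_le s m (fun j hj => (hm_erase j hj).le) (by linarith) hsum_m)
  have hterm : ∀ j ∈ s, v j ^ 2 / (1 - m j) = v j ^ 2 / m j - v j ^ 2 / w j := fun j hj => by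
    have : 1 - 2 * m j ≠ 0 := by linarith [hm_small j hj]
    have : 1 - m j ≠ 0 := by linarith [hm_small j hj, hm_erase j hj]
    have := (hm_erase j hj).ne'
    simp only [w]
    field_simp
    ring
  have hterm₀ : v i₀ ^ 2 / (1 - m i₀) - v i₀ ^ 2 / m i₀
      = v i₀ ^ 2 / (σ * (1 - σ) / (1 - 2 * σ)) := by
    have : 1 - 2 * σ ≠ 0 := by linarith
    have : 1 - σ ≠ 0 := by linarith
    rw [show m i₀ = 1 - σ by ring, sub_sub_cancel]
    field_simp
    ring
  rw [← add_sum_erase t _ hi₀, ← add_sum_erase t _ hi₀, sum_congr rfl hterm, sum_sub_distrib]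
  linarith

section Bregman

open MeasureTheory

/-- Integrand of the Taylor remainder of `x ↦ x log x` between `y` and `x`. -/
def bregmanIntegrand (x y τ : ℝ) : ℝ := (1 - τ) * (x - y) ^ 2 / ((1 - τ) * y + τ * x)

lemma bregmanIntegrand_zero_left {y τ : ℝ} (hy : y ≠ 0) (hτ : τ ≠ 1) :
    bregmanIntegrand 0 y τ = y := by
  have : 1 - τ ≠ 0 := sub_ne_zero.2 hτ.symm
  simp only [bregmanIntegrand]
  field_simp
  ring

lemma intervalIntegrable_bregmanIntegrand {x y : ℝ} (hx : 0 ≤ x) (hy : 0 < y) :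
    IntervalIntegrable (bregmanIntegrand x y) volume 0 1 := by
  rcases hx.eq_or_lt with rfl | hx
  · refine (intervalIntegrable_const (c := y)).congr_uIoo fun τ hτ => ?_
    rw [Set.uIoo_of_le zero_le_one] at hτ
    exact (bregmanIntegrand_zero_left hy.ne' hτ.2.ne).symm
  · refine ContinuousOn.intervalIntegrable (ContinuousOn.div (by fun_prop) (by fun_prop) ?_)
    rw [Set.uIcc_of_le zero_le_one]
    rintro τ ⟨h₀, h₁⟩
    nlinarith [mul_nonneg (sub_nonneg.2 h₁) hy.le, mul_nonneg h₀ hx.le]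

lemma mul_log_div_eq_integral_bregmanIntegrand {x y : ℝ} (hx : 0 ≤ x) (hy : 0 < y) :
    x * log (x / y) = (∫ τ in (0 : ℝ)..1, bregmanIntegrand x y τ) + x - y := by
  rcases hx.eq_or_lt with rfl | hx
  · rw [intervalIntegral.integral_congr_uIoo (g := fun _ => y) fun τ hτ => by
      rw [Set.uIoo_of_le zero_le_one] at hτ
      exact bregmanIntegrand_zero_left hy.ne' hτ.2.ne]
    simp
  have hderiv : ∀ τ ∈ Set.uIcc (0 : ℝ) 1, HasDerivAt
      (fun s => -(x - y) * s + x * log ((1 - s) * y + s * x)) (bregmanIntegrand x y τ) τ := by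
    intro τ hτ
    rw [Set.uIcc_of_le zero_le_one] at hτ
    have hden : 0 < (1 - τ) * y + τ * x := by
      nlinarith [mul_nonneg (sub_nonneg.2 hτ.2) hy.le, mul_nonneg hτ.1 hx.le]
    have hlin : HasDerivAt (fun s : ℝ => (1 - s) * y + s * x) (x - y) τ := by
      rw [show (fun s : ℝ => (1 - s) * y + s * x) = fun s => y + s * (x - y) by ext s; ring]
      simpa using ((hasDerivAt_id' τ).mul_const (x - y)).const_add y
    refine (((hasDerivAt_id' τ).const_mul (-(x - y))).add
      ((hlin.log hden.ne').const_mul x)).congr_deriv ?_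
    rw [bregmanIntegrand, eq_div_iff hden.ne', add_mul, mul_assoc x, div_mul_cancel₀ _ hden.ne']
    ring
  rw [intervalIntegral.integral_eq_sub_of_hasDerivAt hderiv
    (intervalIntegrable_bregmanIntegrand hx.le hy), log_div hx.ne' hy.ne']
  norm_num
  ring

lemma intervalIntegrable_sum_bregmanIntegrand {ι : Type*} (t : Finset ι) {f g : ι → ℝ}
    (hfg : ∀ i ∈ t, 0 ≤ f i ∧ 0 < g i) :
    IntervalIntegrable (fun τ => ∑ i ∈ t, bregmanIntegrand (f i) (g i) τ) volume 0 1 := by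
  simpa only [← sum_fn] using IntervalIntegrable.sum t fun i hi =>
    intervalIntegrable_bregmanIntegrand (hfg i hi).1 (hfg i hi).2

lemma sum_mul_log_div_eq_integral_sum_bregmanIntegrand {ι : Type*} (t : Finset ι) {f g : ι → ℝ}
    (hfg : ∀ i ∈ t, 0 ≤ f i ∧ 0 < g i) (hsum : ∑ i ∈ t, f i = ∑ i ∈ t, g i) :
    ∑ i ∈ t, f i * log (f i / g i)
      = ∫ τ in (0 : ℝ)..1, ∑ i ∈ t, bregmanIntegrand (f i) (g i) τ := by
  rw [intervalIntegral.integral_finsetSum fun i hi =>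
    intervalIntegrable_bregmanIntegrand (hfg i hi).1 (hfg i hi).2,
    sum_congr rfl fun i hi => mul_log_div_eq_integral_bregmanIntegrand (hfg i hi).1 (hfg i hi).2,
    sum_sub_distrib, sum_add_distrib, hsum, add_sub_cancel_right]

/-- Both sides are multiples of the two sides of `sum_sq_div_one_sub_le_sum_sq_div` for the
mixture `(1 - τ) Q + τ P`. -/
lemma sum_bregmanIntegrand_compl_le {ι : Type*} (t : Finset ι) (P Q : ι → ℝ)
    (hP₀ : ∀ i ∈ t, 0 ≤ P i) (hQ₀ : ∀ i ∈ t, 0 < Q i) (hQ₁ : ∀ i ∈ t, Q i < 1)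
    (hP : ∑ i ∈ t, P i = 1) (hQ : ∑ i ∈ t, Q i = 1) {τ : ℝ} (hτ₀ : 0 ≤ τ) (hτ₁ : τ ≤ 1) :
    ∑ i ∈ t, bregmanIntegrand (1 - P i) (1 - Q i) τ ≤ ∑ i ∈ t, bregmanIntegrand (P i) (Q i) τ := by
  rcases hτ₁.eq_or_lt with rfl | hτ₁
  · simp [bregmanIntegrand]
  have hP₁ : ∀ i ∈ t, P i ≤ 1 := fun i hi => hP ▸ single_le_sum hP₀ hi
  set m : ι → ℝ := fun i => (1 - τ) * Q i + τ * P i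
  have hm₀ : ∀ i ∈ t, 0 < m i := fun i hi => by
    nlinarith [mul_pos (sub_pos.2 hτ₁) (hQ₀ i hi), mul_nonneg hτ₀ (hP₀ i hi)]
  have hm₁ : ∀ i ∈ t, m i < 1 := fun i hi => by
    nlinarith [mul_lt_mul_of_pos_left (hQ₁ i hi) (sub_pos.2 hτ₁),
      mul_le_mul_of_nonneg_left (hP₁ i hi) hτ₀]
  have hm : ∑ i ∈ t, m i = 1 := by
    simp only [m, sum_add_distrib, ← mul_sum, hP, hQ]
    ring
  have hquad := sum_sq_div_one_sub_le_sum_sq_div t m (fun i => P i - Q i) hm₀ hm₁ hm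
    (by simp [sum_sub_distrib, hP, hQ])
  have hcompl : ∀ i ∈ t, bregmanIntegrand (1 - P i) (1 - Q i) τ
      = (1 - τ) * ((P i - Q i) ^ 2 / (1 - m i)) := fun i _ => by
    simp only [bregmanIntegrand, m]
    ring_nf
  have heq : ∀ i ∈ t, bregmanIntegrand (P i) (Q i) τ = (1 - τ) * ((P i - Q i) ^ 2 / m i) :=
    fun i _ => mul_div_assoc _ _ _
  rw [sum_congr rfl hcompl, sum_congr rfl heq, ← mul_sum, ← mul_sum]
  exact mul_le_mul_of_nonneg_left hquad (sub_pos.2 hτ₁).le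

lemma sum_compl_mul_log_div_le_sum_mul_log_div {ι : Type*} (t : Finset ι) (P Q : ι → ℝ)
    (hP₀ : ∀ i ∈ t, 0 ≤ P i) (hQ₀ : ∀ i ∈ t, 0 < Q i) (hQ₁ : ∀ i ∈ t, Q i < 1)
    (hP : ∑ i ∈ t, P i = 1) (hQ : ∑ i ∈ t, Q i = 1) :
    ∑ i ∈ t, (1 - P i) * log ((1 - P i) / (1 - Q i)) ≤ ∑ i ∈ t, P i * log (P i / Q i) := by
  have hPQ : ∀ i ∈ t, 0 ≤ P i ∧ 0 < Q i := fun i hi => ⟨hP₀ i hi, hQ₀ i hi⟩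
  have hcompl : ∀ i ∈ t, 0 ≤ 1 - P i ∧ 0 < 1 - Q i := fun i hi =>
    ⟨sub_nonneg.2 (hP ▸ single_le_sum hP₀ hi), sub_pos.2 (hQ₁ i hi)⟩
  rw [sum_mul_log_div_eq_integral_sum_bregmanIntegrand t hcompl (by simp [sum_sub_distrib, hP, hQ]),
    sum_mul_log_div_eq_integral_sum_bregmanIntegrand t hPQ (hP.trans hQ.symm)]
  exact intervalIntegral.integral_mono_on zero_le_one
    (intervalIntegrable_sum_bregmanIntegrand t hcompl)
    (intervalIntegrable_sum_bregmanIntegrand t hPQ)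
    fun τ hτ => sum_bregmanIntegrand_compl_le t P Q hP₀ hQ₀ hQ₁ hP hQ hτ.1 hτ.2

end Bregman

/-- The slack `1 - ∑ P` enters twice: as an extra coordinate completing `P` and `Q` to
probability vectors, and through the nonnegativity of the binary relative entropy. -/
lemma sum_edge_terms_le_two_mul_slack_term {ι : Type*} (s : Finset ι) (P Q : ι → ℝ)
    (hP₀ : ∀ i ∈ s, 0 ≤ P i) (hQ₀ : ∀ i ∈ s, 0 < Q i) (hQ₁ : ∀ i ∈ s, Q i < 1)
    (hP : ∑ i ∈ s, P i ≤ 1) (hQ_pos : 0 < ∑ i ∈ s, Q i) (hQ : ∑ i ∈ s, Q i < 1) :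
    ∑ i ∈ s, (P i * log (Q i / P i) + (1 - P i) * log ((1 - P i) / (1 - Q i)))
      ≤ 2 * ((1 - ∑ i ∈ s, P i) * log ((1 - ∑ i ∈ s, P i) / (1 - ∑ i ∈ s, Q i))) := by
  have hcompl := sum_compl_mul_log_div_le_sum_mul_log_div (insertNone s)
    (fun o => o.elim (1 - ∑ i ∈ s, P i) P) (fun o => o.elim (1 - ∑ i ∈ s, Q i) Q)
    (forall_mem_insertNone.2 ⟨sub_nonneg.2 hP, hP₀⟩)
    (forall_mem_insertNone.2 ⟨sub_pos.2 hQ, hQ₀⟩)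
    (forall_mem_insertNone.2 ⟨sub_lt_self 1 hQ_pos, hQ₁⟩)
    (by simp) (by simp)
  simp only [sum_insertNone, Option.elim, sub_sub_cancel] at hcompl
  have hkl := bernoulli_kl_nonneg (sum_nonneg hP₀) hP hQ_pos hQ
  have hswap : ∀ i ∈ s, P i * log (Q i / P i) = -(P i * log (P i / Q i)) := fun i _ => by
    rw [← inv_div, log_inv, mul_neg]
  rw [sum_add_distrib, sum_congr rfl hswap, sum_neg_distrib]
  linarith

section Graph

variable {V : Type*} [Fintype V] (G : SimpleGraph V)

lemma mem_edgeFS_s14 {e : Sym2 V} : e ∈ edgeFS G ↔ e ∈ G.edgeSet := Set.Finite.mem_toFinset _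

lemma mk_mem_edgeFS {a b : V} : s(a, b) ∈ edgeFS G ↔ G.Adj a b := mem_edgeFS_s14 G

lemma mem_nbrFS {u w : V} : w ∈ nbrFS G u ↔ G.Adj u w := Set.Finite.mem_toFinset _

lemma incSum_eq_sum_nbrFS (x : Sym2 V → ℝ) (u : V) :
    incSum G x u = ∑ w ∈ nbrFS G u, x s(u, w) := by
  have himage : (edgeFS G).filter (u ∈ ·) = (nbrFS G u).image (fun w => s(u, w)) := by
    ext e
    induction e using Sym2.ind with
    | _ a b =>
      simp only [mem_filter, mk_mem_edgeFS, mem_image, mem_nbrFS, Sym2.mem_iff, Sym2.eq_iff]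
      constructor
      · rintro ⟨hab, rfl | rfl⟩
        exacts [⟨b, hab, by simp⟩, ⟨a, hab.symm, by simp⟩]
      · rintro ⟨w, huw, ⟨rfl, rfl⟩ | ⟨rfl, rfl⟩⟩
        exacts [⟨huw, by simp⟩, ⟨huw.symm, by simp⟩]
  rw [incSum, himage, sum_image fun w₁ _ w₂ _ h => Sym2.congr_right.mp h]

lemma sum_filter_mem_mk {a b : V} (hab : a ≠ b) (g : V → ℝ) :
    ∑ v ∈ univ.filter (· ∈ s(a, b)), g v = g a + g b := by
  rw [show univ.filter (· ∈ s(a, b)) = {a, b} by ext; simp [Sym2.mem_iff], sum_pair hab]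

lemma sum_mul_incSum (t : Sym2 V → ℝ) (g : V → ℝ) :
    ∑ v, g v * incSum G t v = ∑ e ∈ edgeFS G, (∑ v ∈ univ.filter (· ∈ e), g v) * t e := by
  simp only [incSum, mul_sum, sum_mul, sum_filter]
  rw [sum_comm]
  refine sum_congr rfl fun e _ => sum_congr rfl fun v _ => ?_
  split_ifs <;> ring

lemma sum_incSum (t : Sym2 V → ℝ) : ∑ v, incSum G t v = 2 * ∑ e ∈ edgeFS G, t e := by
  have h := sum_mul_incSum G t 1
  simp only [Pi.one_apply, one_mul] at h
  rw [h, mul_sum]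
  refine sum_congr rfl fun e he => ?_
  induction e using Sym2.ind with
  | _ a b => rw [sum_filter_mem_mk ((mk_mem_edgeFS G).1 he).ne]; ring

end Graph

section Objective

variable {V : Type*} [Fintype V] {G : SimpleGraph V} {θ : Sym2 V → ℝ} {z : ℝ}

def betheObjective (G : SimpleGraph V) (θ : Sym2 V → ℝ) (z : ℝ) (t : Sym2 V → ℝ) : ℝ :=
  (∑ e ∈ edgeFS G, t e) * log z + SBW G θ t

lemma betheObjective_eq_of_stationary (hθ : ∀ e ∈ edgeFS G, θ e ≠ 0) {q : Sym2 V → ℝ}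
    (ℓ : V → ℝ) (hstat : ∀ a b, G.Adj a b →
      log z + log (θ s(a, b)) = log (q s(a, b)) + log (1 - q s(a, b)) - ℓ a - ℓ b)
    (t : Sym2 V → ℝ) :
    betheObjective G θ z t
      = ∑ e ∈ edgeFS G, (t e * (log (q e) + log (1 - q e)) - t e * log (t e)
          + (1 - t e) * log (1 - t e))
        - ∑ v, (ℓ v * incSum G t v + (1 - incSum G t v) * log (1 - incSum G t v)) := by
  have hedge : ∀ e ∈ edgeFS G,
      t e * log z + (t e * log (θ e / t e) + (1 - t e) * log (1 - t e))
        = (t e * (log (q e) + log (1 - q e)) - t e * log (t e) + (1 - t e) * log (1 - t e))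
          - (∑ v ∈ univ.filter (· ∈ e), ℓ v) * t e := by
    intro e he
    induction e using Sym2.ind with
    | _ a b =>
      have hab := (mk_mem_edgeFS G).1 he
      rw [mul_log_div_eq_sub' (hθ _ he), sum_filter_mem_mk hab.ne]
      linear_combination t s(a, b) * hstat a b hab
  rw [betheObjective, SBW, sum_mul, sub_eq_add_neg, ← add_assoc, ← sum_add_distrib,
    sum_congr rfl hedge, sum_sub_distrib, ← sum_mul_incSum,
    sum_add_distrib (f := fun v => ℓ v * incSum G t v)]
  ring

lemma sum_edge_terms_le_sum_slack_terms {q t : Sym2 V → ℝ}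
    (hq : ∀ e ∈ edgeFS G, 0 < q e ∧ q e < 1) (hQ : ∀ v, incSum G q v < 1) (ht : memFM G t) :
    ∑ e ∈ edgeFS G, (t e * log (q e / t e) + (1 - t e) * log ((1 - t e) / (1 - q e)))
      ≤ ∑ v, (1 - incSum G t v) * log ((1 - incSum G t v) / (1 - incSum G q v)) := by
  have hvertex : ∀ v, incSum G (fun e => t e * log (q e / t e)
        + (1 - t e) * log ((1 - t e) / (1 - q e))) v
      ≤ 2 * ((1 - incSum G t v) * log ((1 - incSum G t v) / (1 - incSum G q v))) := by
    intro v
    rcases ((edgeFS G).filter (v ∈ ·)).eq_empty_or_nonempty with hempty | hinc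
    · simp [incSum, hempty]
    · have hmem : ∀ e ∈ (edgeFS G).filter (v ∈ ·), e ∈ edgeFS G := fun e he => (mem_filter.1 he).1
      exact sum_edge_terms_le_two_mul_slack_term _ t q (fun e he => ht.1 e (hmem e he))
        (fun e he => (hq e (hmem e he)).1) (fun e he => (hq e (hmem e he)).2) (ht.2 v)
        (sum_pos (fun e he => (hq e (hmem e he)).1) hinc) (hQ v)
  have hsum := sum_le_sum fun v (_ : v ∈ univ) => hvertex v
  rw [sum_incSum, ← mul_sum] at hsum
  linarith

lemma log_add_log_eq_of_stationary (hz : 0 < z) (hθ : ∀ e ∈ edgeFS G, 0 < θ e)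
    {q : Sym2 V → ℝ} (hq : ∀ e ∈ edgeFS G, 0 < q e ∧ q e < 1) (hQ : ∀ v, incSum G q v < 1)
    (hstat : ∀ a b, G.Adj a b → q s(a, b) * (1 - q s(a, b))
      = z * θ s(a, b) * ((1 - incSum G q a) * (1 - incSum G q b)))
    (a b : V) (hab : G.Adj a b) :
    log z + log (θ s(a, b)) = log (q s(a, b)) + log (1 - q s(a, b))
      - log (1 - incSum G q a) - log (1 - incSum G q b) := by
  have hab' := (mk_mem_edgeFS G).2 hab
  have hQa := (sub_pos.2 (hQ a)).ne'
  have hQb := (sub_pos.2 (hQ b)).ne'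
  have h := congrArg log (hstat a b hab)
  rw [log_mul (hq _ hab').1.ne' (sub_pos.2 (hq _ hab').2).ne',
    log_mul (mul_pos hz (hθ _ hab')).ne' (mul_ne_zero hQa hQb), log_mul hz.ne' (hθ _ hab').ne',
    log_mul hQa hQb] at h
  linarith

theorem betheObjective_le_of_stationary (hz : 0 < z) (hθ : ∀ e ∈ edgeFS G, 0 < θ e)
    {q : Sym2 V → ℝ} (hq : ∀ e ∈ edgeFS G, 0 < q e ∧ q e < 1) (hQ : ∀ v, incSum G q v < 1)
    (hstat : ∀ a b, G.Adj a b → q s(a, b) * (1 - q s(a, b))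
      = z * θ s(a, b) * ((1 - incSum G q a) * (1 - incSum G q b)))
    {t : Sym2 V → ℝ} (ht : memFM G t) :
    betheObjective G θ z t ≤ betheObjective G θ z q := by
  have hedge : ∀ e ∈ edgeFS G,
      (t e * (log (q e) + log (1 - q e)) - t e * log (t e) + (1 - t e) * log (1 - t e))
        - (q e * (log (q e) + log (1 - q e)) - q e * log (q e) + (1 - q e) * log (1 - q e))
      = t e * log (q e / t e) + (1 - t e) * log ((1 - t e) / (1 - q e)) := fun e he => by
    rw [mul_log_div_eq_sub' (hq e he).1.ne', mul_log_div_eq_sub (sub_pos.2 (hq e he).2).ne']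
    ring
  have hvertex : ∀ v,
      (log (1 - incSum G q v) * incSum G t v + (1 - incSum G t v) * log (1 - incSum G t v))
        - (log (1 - incSum G q v) * incSum G q v
          + (1 - incSum G q v) * log (1 - incSum G q v))
      = (1 - incSum G t v) * log ((1 - incSum G t v) / (1 - incSum G q v)) := fun v => by
    rw [mul_log_div_eq_sub (sub_pos.2 (hQ v)).ne']
    ring
  have hθ' : ∀ e ∈ edgeFS G, θ e ≠ 0 := fun e he => (hθ e he).ne'
  have hlog := log_add_log_eq_of_stationary hz hθ hq hQ hstat
  rw [← sub_nonpos, betheObjective_eq_of_stationary hθ' _ hlog,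
    betheObjective_eq_of_stationary hθ' _ hlog, sub_sub_sub_comm, ← sum_sub_distrib,
    ← sum_sub_distrib, sum_congr rfl hedge, sum_congr rfl fun v _ => hvertex v, sub_nonpos]
  exact sum_edge_terms_le_sum_slack_terms hq hQ ht

end Objective

section BeliefPropagation

variable {V : Type*} [Fintype V] {G : SimpleGraph V} {θ : Sym2 V → ℝ} {z : ℝ}
  {y : V × V → ℝ} {q : Sym2 V → ℝ}

def inflow (G : SimpleGraph V) (θ : Sym2 V → ℝ) (y : V × V → ℝ) (u : V) : ℝ :=
  ∑ w ∈ nbrFS G u, θ s(w, u) * y (w, u)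

def BPMarginals (G : SimpleGraph V) (θ : Sym2 V → ℝ) (z : ℝ) (y : V × V → ℝ)
    (q : Sym2 V → ℝ) : Prop :=
  ∀ u v, G.Adj u v →
    q s(u, v) = θ s(u, v) * y (u, v) * y (v, u) / (z + θ s(u, v) * y (u, v) * y (v, u))

lemma MsgFP.weighted_pos (hθ : ∀ e ∈ G.edgeSet, 0 < θ e) (hy : MsgFP G θ z y) {u w : V}
    (huw : G.Adj u w) : 0 < θ s(w, u) * y (w, u) :=
  mul_pos (hθ _ (G.mem_edgeSet.2 huw.symm)) (hy w u huw.symm).1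

lemma MsgFP.inflow_nonneg (hθ : ∀ e ∈ G.edgeSet, 0 < θ e) (hy : MsgFP G θ z y) (u : V) :
    0 ≤ inflow G θ y u :=
  sum_nonneg fun _ hw => (hy.weighted_pos hθ ((mem_nbrFS G).1 hw)).le

lemma MsgFP.mul_one_add_inflow (hθ : ∀ e ∈ G.edgeSet, 0 < θ e) (hy : MsgFP G θ z y)
    {u v : V} (huv : G.Adj u v) :
    y (u, v) * (1 + inflow G θ y u) = z + θ s(u, v) * y (u, v) * y (v, u) := by
  have hrest : 0 ≤ ∑ w ∈ (nbrFS G u).erase v, θ s(w, u) * y (w, u) :=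
    sum_nonneg fun _ hw => (hy.weighted_pos hθ ((mem_nbrFS G).1 (mem_of_mem_erase hw))).le
  have hfix : y (u, v) * (1 + ∑ w ∈ (nbrFS G u).erase v, θ s(w, u) * y (w, u)) = z := by
    rw [(hy u v huv).2, div_mul_cancel₀ _ (by linarith)]
  rw [inflow, ← add_sum_erase _ _ ((mem_nbrFS G).2 huv), Sym2.eq_swap, ← hfix]
  ring

lemma bp_marginal_eq (hθ : ∀ e ∈ G.edgeSet, 0 < θ e) (hy : MsgFP G θ z y)
    (hq : BPMarginals G θ z y q)
    {u v : V} (huv : G.Adj u v) :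
    q s(u, v) = θ s(v, u) * y (v, u) / (1 + inflow G θ y u) := by
  have hy₀ := (hy u v huv).1.ne'
  have hS := (add_pos_of_pos_of_nonneg one_pos (hy.inflow_nonneg hθ u)).ne'
  rw [hq u v huv, ← hy.mul_one_add_inflow hθ huv, Sym2.eq_swap]
  field_simp

lemma one_sub_incSum_bp_marginal (hθ : ∀ e ∈ G.edgeSet, 0 < θ e) (hy : MsgFP G θ z y)
    (hq : BPMarginals G θ z y q)
    (u : V) : 1 - incSum G q u = (1 + inflow G θ y u)⁻¹ := by
  have hS := (add_pos_of_pos_of_nonneg one_pos (hy.inflow_nonneg hθ u)).ne'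
  rw [incSum_eq_sum_nbrFS, sum_congr rfl fun w hw => bp_marginal_eq hθ hy hq ((mem_nbrFS G).1 hw),
    ← sum_div, ← inflow]
  field_simp
  ring

lemma incSum_bp_marginal_lt_one (hθ : ∀ e ∈ G.edgeSet, 0 < θ e) (hy : MsgFP G θ z y)
    (hq : BPMarginals G θ z y q)
    (u : V) : incSum G q u < 1 := by
  rw [← sub_pos, one_sub_incSum_bp_marginal hθ hy hq]
  exact inv_pos.2 (add_pos_of_pos_of_nonneg one_pos (hy.inflow_nonneg hθ u))

lemma bp_marginal_mem_Ioo (hz : 0 < z) (hθ : ∀ e ∈ G.edgeSet, 0 < θ e) (hy : MsgFP G θ z y)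
    (hq : BPMarginals G θ z y q)
    {e : Sym2 V} (he : e ∈ edgeFS G) : 0 < q e ∧ q e < 1 := by
  induction e using Sym2.ind with
  | _ u v =>
    have huv := (mk_mem_edgeFS G).1 he
    have hnum : 0 < θ s(u, v) * y (u, v) * y (v, u) :=
      mul_pos (mul_pos (hθ _ (G.mem_edgeSet.2 huv)) (hy u v huv).1) (hy v u huv.symm).1
    rw [hq u v huv]
    exact ⟨div_pos hnum (by linarith), (div_lt_one (by linarith)).2 (by linarith)⟩

lemma bp_marginal_mul_one_sub (hθ : ∀ e ∈ G.edgeSet, 0 < θ e) (hy : MsgFP G θ z y)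
    (hq : BPMarginals G θ z y q)
    {u v : V} (huv : G.Adj u v) :
    q s(u, v) * (1 - q s(u, v))
      = z * θ s(u, v) * ((1 - incSum G q u) * (1 - incSum G q v)) := by
  have hyu := (hy u v huv).1.ne'
  have hyv := (hy v u huv.symm).1.ne'
  have hSu : 1 + inflow G θ y u = (z + θ s(u, v) * y (u, v) * y (v, u)) / y (u, v) := by
    rw [eq_div_iff hyu, mul_comm, hy.mul_one_add_inflow hθ huv]
  have hSv : 1 + inflow G θ y v = (z + θ s(u, v) * y (u, v) * y (v, u)) / y (v, u) := by
    rw [eq_div_iff hyv, mul_comm, hy.mul_one_add_inflow hθ huv.symm, Sym2.eq_swap]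
    ring
  have hD : z + θ s(u, v) * y (u, v) * y (v, u) ≠ 0 := by
    rw [← hy.mul_one_add_inflow hθ huv]
    exact mul_ne_zero hyu (add_pos_of_pos_of_nonneg one_pos (hy.inflow_nonneg hθ u)).ne'
  rw [one_sub_incSum_bp_marginal hθ hy hq, one_sub_incSum_bp_marginal hθ hy hq, hSu, hSv,
    hq u v huv]
  field_simp
  ring

end BeliefPropagation

/-- The vector `x(z)` of BP marginals maximizes
`x ↦ (∑_e x_e) ln z + S^B_G(x)` over the fractional matching polytope `FM(G)`. -/
theorem bp_marginals_maximize_bethe {V : Type*} [Fintype V] (G : SimpleGraph V)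
    (θ : Sym2 V → ℝ) (hθ : ∀ e ∈ G.edgeSet, 0 < θ e)
    (y : ℝ → V × V → ℝ) (hy : ∀ z : ℝ, 0 < z → MsgFP G θ z (y z))
    (x : ℝ → Sym2 V → ℝ)
    (hx : ∀ z : ℝ, 0 < z → ∀ u v : V, G.Adj u v →
      x z s(u, v) = θ s(u, v) * y z (u, v) * y z (v, u)
        / (z + θ s(u, v) * y z (u, v) * y z (v, u))) :
    ∀ z : ℝ, 0 < z → ∀ x' : Sym2 V → ℝ, memFM G x' →
      (∑ e ∈ edgeFS G, x' e) * Real.log z + SBW G θ x'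
        ≤ (∑ e ∈ edgeFS G, x z e) * Real.log z + SBW G θ (x z) := by
  intro z hz x' hx'
  exact betheObjective_le_of_stationary hz (fun e he => hθ e ((mem_edgeFS_s14 G).1 he))
    (fun e he => bp_marginal_mem_Ioo hz hθ (hy z hz) (hx z hz) he)
    (incSum_bp_marginal_lt_one hθ (hy z hz) (hx z hz))
    (fun a b hab => bp_marginal_mul_one_sub hθ (hy z hz) (hx z hz) hab) hx'
end
end

section
/- Let T = (V,E) be a (possibly infinite) simple graph that is a tree (connected and acyclic), in which every vertex has degree at most D for some D ∈ ℕ, with edge weights (θ_e)_{e∈E} satisfying 0 < θ_e ≤ C for all e ∈ E and some constant C > 0. Then for every z > 0 there exists exactly one vector y = (y_{u→v}) ∈ (0,∞)^{E⃗} satisfying y_{u→v} = z / (1 + ∑_{w ∈ ∂u∖{v}} θ_{wu} y_{w→u}) for every directed edge u→v. -/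
open Finset
open scoped BigOperators Classical

noncomputable section

/-! In the coordinates `x = log y` the recursion reads `x = G x` with
`G x (u→v) = log z - log (1 + ∑_{w ∈ ∂u∖{v}} θ_{wu} exp x(w→u))`. Every value of `G` is at most
`log z`, and on inputs bounded by `log z` the sum is at most `K = D C z`, so `G` takes values in
`[log z - log (1 + K), log z]`. By convexity of `exp`, moving the inputs by at most `Δ` moves
`log (1 + ∑)` by at most `K / (1 + K) * Δ`: `G` contracts the sup distance. Hence the iterates of
`G` converge pointwise to a fixed point, and two solutions are at distance at most
`(K / (1 + K)) ^ n * log (1 + K)` for every `n`. -/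

open Real Filter Topology Function

/-- Weighted AM–GM for `exp` with weights `1 / (1 + A)` and `A / (1 + A)`. -/
lemma one_add_le_exp_mul_one_add_mul_exp_neg {A : ℝ} (hA : 0 ≤ A) (Δ : ℝ) :
    1 + A ≤ exp (A / (1 + A) * Δ) * (1 + A * exp (-Δ)) := by
  have h1A : (1 + A) ≠ 0 := by positivity
  have hsplit : exp (A / (1 + A) * Δ) * (1 + A * exp (-Δ))
      = exp (A / (1 + A) * Δ) + A * exp (-(Δ / (1 + A))) := by
    rw [mul_add, mul_one, mul_left_comm, ← exp_add]
    congr 3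
    field_simp
    ring
  have hmean : A / (1 + A) * Δ + 1 + A * (-(Δ / (1 + A)) + 1) = 1 + A := by
    field_simp
    ring
  rw [hsplit]
  nlinarith [add_one_le_exp (A / (1 + A) * Δ), add_one_le_exp (-(Δ / (1 + A)))]

lemma log_one_add_sub_log_one_add_le {A B K Δ : ℝ} (hA : 0 ≤ A) (hAK : A ≤ K)
    (hAB : A ≤ exp Δ * B) (hΔ : 0 ≤ Δ) :
    log (1 + A) - log (1 + B) ≤ K / (1 + K) * Δ := by
  have hB : A * exp (-Δ) ≤ B := by
    rw [exp_neg, ← div_eq_mul_inv, div_le_iff₀ (exp_pos Δ)]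
    linarith
  have hAe : 0 ≤ A * exp (-Δ) := by positivity
  have hq : A / (1 + A) ≤ K / (1 + K) := by
    rw [div_le_div_iff₀ (by linarith) (by linarith)]
    nlinarith
  have hmul : 1 + A ≤ exp (K / (1 + K) * Δ) * (1 + B) :=
    calc 1 + A ≤ exp (A / (1 + A) * Δ) * (1 + A * exp (-Δ)) :=
          one_add_le_exp_mul_one_add_mul_exp_neg hA Δ
      _ ≤ exp (K / (1 + K) * Δ) * (1 + B) := by gcongr
  have hlog := log_le_log (by linarith) hmul
  rw [log_mul (exp_pos _).ne' (by linarith), log_exp] at hlog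
  linarith

lemma sum_mul_exp_le_exp_mul_sum_mul_exp {ι : Type*} {s : Finset ι} {c a b : ι → ℝ} {Δ : ℝ}
    (hc : ∀ i ∈ s, 0 ≤ c i) (hab : ∀ i ∈ s, a i ≤ b i + Δ) :
    ∑ i ∈ s, c i * exp (a i) ≤ exp Δ * ∑ i ∈ s, c i * exp (b i) := by
  rw [mul_sum]
  refine sum_le_sum fun i hi => ?_
  calc c i * exp (a i) ≤ c i * exp (b i + Δ) := by
        gcongr
        exacts [hc i hi, hab i hi]
    _ = exp Δ * (c i * exp (b i)) := by rw [exp_add]; ring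

lemma abs_log_one_add_sum_mul_exp_sub_le {ι : Type*} {s : Finset ι} {c a b : ι → ℝ} {K Δ : ℝ}
    (hc : ∀ i ∈ s, 0 ≤ c i) (haK : ∑ i ∈ s, c i * exp (a i) ≤ K)
    (hbK : ∑ i ∈ s, c i * exp (b i) ≤ K) (hΔ : 0 ≤ Δ) (hab : ∀ i ∈ s, |a i - b i| ≤ Δ) :
    |log (1 + ∑ i ∈ s, c i * exp (a i)) - log (1 + ∑ i ∈ s, c i * exp (b i))|
      ≤ K / (1 + K) * Δ := by
  have hnonneg : ∀ f : ι → ℝ, 0 ≤ ∑ i ∈ s, c i * exp (f i) := fun f =>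
    sum_nonneg fun i hi => mul_nonneg (hc i hi) (exp_pos _).le
  rw [abs_sub_le_iff]
  exact ⟨log_one_add_sub_log_one_add_le (hnonneg a) haK
      (sum_mul_exp_le_exp_mul_sum_mul_exp hc fun i hi => by
        linarith [(abs_sub_le_iff.1 (hab i hi)).1]) hΔ,
    log_one_add_sub_log_one_add_le (hnonneg b) hbK
      (sum_mul_exp_le_exp_mul_sum_mul_exp hc fun i hi => by
        linarith [(abs_sub_le_iff.1 (hab i hi)).2]) hΔ⟩

lemma eq_of_abs_sub_le_pow_mul {a b κ c : ℝ} (hκ₀ : 0 ≤ κ) (hκ₁ : κ < 1)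
    (h : ∀ n : ℕ, |a - b| ≤ κ ^ n * c) : a = b := by
  have hlim : Tendsto (fun n : ℕ => κ ^ n * c) atTop (𝓝 0) := by
    simpa using (tendsto_pow_atTop_nhds_zero_of_lt_one hκ₀ hκ₁).mul_const c
  exact sub_eq_zero.1 (abs_nonpos_iff.1 (ge_of_tendsto' hlim h))

theorem exists_isFixedPt_of_dist_iterate_le_geometric {α β : Type*} [MetricSpace β]
    [CompleteSpace β] {G : (α → β) → α → β} (hG : Continuous G) (x₀ : α → β) {κ c : ℝ}
    (hκ : κ < 1) (h : ∀ n p, dist (G^[n] x₀ p) (G^[n + 1] x₀ p) ≤ c * κ ^ n) :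
    ∃ x, IsFixedPt G x := by
  choose x hx using fun p =>
    cauchySeq_tendsto_of_complete (cauchySeq_of_le_geometric κ c hκ (h · p))
  exact ⟨x, isFixedPt_of_tendsto_iterate (tendsto_pi_nhds.2 hx) hG.continuousAt⟩

section LogMessageMap

variable {V : Type*} (N : V → Finset V) (θ : Sym2 V → ℝ) (z : ℝ)

def logMessageMap (x : V × V → ℝ) (p : V × V) : ℝ :=
  log z - log (1 + ∑ w ∈ (N p.1).erase p.2, θ s(w, p.1) * exp (x (w, p.1)))

variable {N θ z}

lemma sum_erase_mul_exp_nonneg (hθ : ∀ u, ∀ w ∈ N u, 0 ≤ θ s(w, u)) (x : V × V → ℝ)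
    (u v : V) : 0 ≤ ∑ w ∈ (N u).erase v, θ s(w, u) * exp (x (w, u)) :=
  sum_nonneg fun w hw => mul_nonneg (hθ u w (mem_of_mem_erase hw)) (exp_pos _).le

lemma logMessageMap_le (hθ : ∀ u, ∀ w ∈ N u, 0 ≤ θ s(w, u)) (x : V × V → ℝ) (p : V × V) :
    logMessageMap N θ z x p ≤ log z := by
  have := log_nonneg (le_add_of_nonneg_right (sum_erase_mul_exp_nonneg hθ x p.1 p.2))
  rw [logMessageMap]
  linarith

lemma sum_erase_mul_exp_le {W : ℝ} (hz : 0 < z) (hθ : ∀ u, ∀ w ∈ N u, 0 ≤ θ s(w, u))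
    (hW : ∀ u, ∑ w ∈ N u, θ s(w, u) ≤ W) {x : V × V → ℝ} {u v : V}
    (hx : ∀ w ∈ (N u).erase v, x (w, u) ≤ log z) :
    ∑ w ∈ (N u).erase v, θ s(w, u) * exp (x (w, u)) ≤ W * z :=
  calc ∑ w ∈ (N u).erase v, θ s(w, u) * exp (x (w, u))
      ≤ ∑ w ∈ (N u).erase v, θ s(w, u) * z := sum_le_sum fun w hw =>
        mul_le_mul_of_nonneg_left (exp_log hz ▸ exp_le_exp.2 (hx w hw))
          (hθ u w (mem_of_mem_erase hw))
    _ = (∑ w ∈ (N u).erase v, θ s(w, u)) * z := sum_mul _ _ _ |>.symm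
    _ ≤ (∑ w ∈ N u, θ s(w, u)) * z := by
        gcongr ?_ * z
        exact sum_le_sum_of_subset_of_nonneg (erase_subset _ _) fun w hw _ => hθ u w hw
    _ ≤ W * z := by gcongr; exact hW u

lemma log_sub_log_one_add_le_logMessageMap {W : ℝ} (hz : 0 < z)
    (hθ : ∀ u, ∀ w ∈ N u, 0 ≤ θ s(w, u)) (hW : ∀ u, ∑ w ∈ N u, θ s(w, u) ≤ W)
    {x : V × V → ℝ} {u v : V} (hx : ∀ w ∈ (N u).erase v, x (w, u) ≤ log z) :
    log z - log (1 + W * z) ≤ logMessageMap N θ z x (u, v) := by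
  have hS := sum_erase_mul_exp_nonneg hθ x u v
  have := log_le_log (by linarith) (by linarith [sum_erase_mul_exp_le hz hθ hW hx] :
    1 + ∑ w ∈ (N u).erase v, θ s(w, u) * exp (x (w, u)) ≤ 1 + W * z)
  dsimp only [logMessageMap]
  linarith

lemma abs_logMessageMap_sub_le {W Δ : ℝ} (hz : 0 < z) (hθ : ∀ u, ∀ w ∈ N u, 0 ≤ θ s(w, u))
    (hW : ∀ u, ∑ w ∈ N u, θ s(w, u) ≤ W) (hΔ : 0 ≤ Δ) {x x' : V × V → ℝ} {u v : V}
    (hx : ∀ w ∈ (N u).erase v, x (w, u) ≤ log z) (hx' : ∀ w ∈ (N u).erase v, x' (w, u) ≤ log z)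
    (hxx' : ∀ w ∈ (N u).erase v, |x (w, u) - x' (w, u)| ≤ Δ) :
    |logMessageMap N θ z x (u, v) - logMessageMap N θ z x' (u, v)|
      ≤ W * z / (1 + W * z) * Δ := by
  rw [logMessageMap, logMessageMap, sub_sub_sub_cancel_left, abs_sub_comm]
  exact abs_log_one_add_sum_mul_exp_sub_le (fun w hw => hθ u w (mem_of_mem_erase hw))
    (sum_erase_mul_exp_le hz hθ hW hx) (sum_erase_mul_exp_le hz hθ hW hx') hΔ hxx'

lemma continuous_logMessageMap (hθ : ∀ u, ∀ w ∈ N u, 0 ≤ θ s(w, u)) :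
    Continuous (logMessageMap N θ z) :=
  continuous_pi fun p => continuous_const.sub <| Continuous.log (by fun_prop) fun x =>
    (add_pos_of_pos_of_nonneg one_pos (sum_erase_mul_exp_nonneg hθ x p.1 p.2)).ne'

lemma logMessageMap_comp_log (hz : 0 < z) (hθ : ∀ u, ∀ w ∈ N u, 0 ≤ θ s(w, u))
    {y : V × V → ℝ} {u v : V} (hy : ∀ w ∈ (N u).erase v, 0 < y (w, u)) :
    logMessageMap N θ z (log ∘ y) (u, v)
      = log (z / (1 + ∑ w ∈ (N u).erase v, θ s(w, u) * y (w, u))) := by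
  have hsum : ∑ w ∈ (N u).erase v, θ s(w, u) * exp ((log ∘ y) (w, u))
      = ∑ w ∈ (N u).erase v, θ s(w, u) * y (w, u) :=
    sum_congr rfl fun w hw => by rw [comp_apply, exp_log (hy w hw)]
  have hpos := add_pos_of_pos_of_nonneg one_pos (sum_erase_mul_exp_nonneg hθ (log ∘ y) u v)
  rw [hsum] at hpos
  rw [logMessageMap, hsum, log_div hz.ne' hpos.ne']

theorem exists_isFixedPt_logMessageMap {W : ℝ} (hz : 0 < z)
    (hθ : ∀ u, ∀ w ∈ N u, 0 ≤ θ s(w, u)) (hW : ∀ u, ∑ w ∈ N u, θ s(w, u) ≤ W) (hW₀ : 0 ≤ W) :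
    ∃ x, IsFixedPt (logMessageMap N θ z) x := by
  set G := logMessageMap N θ z
  have hK : 0 ≤ W * z := mul_nonneg hW₀ hz.le
  have hle : ∀ n p, G^[n] (fun _ => log z) p ≤ log z := by
    rintro (_ | n) p
    · exact le_rfl
    · rw [iterate_succ_apply']
      exact logMessageMap_le hθ _ p
  refine exists_isFixedPt_of_dist_iterate_le_geometric (κ := W * z / (1 + W * z))
    (c := log (1 + W * z)) (continuous_logMessageMap hθ) (fun _ => log z)
    ((div_lt_one (by linarith)).2 (lt_one_add _)) fun n => ?_
  induction n with
  | zero =>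
    rintro ⟨u, v⟩
    have := log_sub_log_one_add_le_logMessageMap (x := fun _ => log z) (u := u) (v := v) hz hθ hW
      fun _ _ => le_rfl
    have := logMessageMap_le (z := z) hθ (fun _ => log z) (u, v)
    rw [iterate_zero_apply, iterate_one, Real.dist_eq, abs_sub_le_iff]
    constructor <;> linarith
  | succ n ih =>
    rintro ⟨u, v⟩
    rw [iterate_succ_apply', iterate_succ_apply' _ (n + 1), Real.dist_eq]
    refine (abs_logMessageMap_sub_le hz hθ hW (dist_nonneg.trans (ih (u, v)))
      (fun w _ => hle n (w, u)) (fun w _ => hle (n + 1) (w, u))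
      fun w _ => Real.dist_eq _ _ ▸ ih (w, u)).trans (le_of_eq (by ring))

theorem eq_of_logMessageMap_eq_self {W : ℝ} (hz : 0 < z) (hθ : ∀ u, ∀ w ∈ N u, 0 ≤ θ s(w, u))
    (hW : ∀ u, ∑ w ∈ N u, θ s(w, u) ≤ W) (hW₀ : 0 ≤ W) {x x' : V × V → ℝ}
    (hx : ∀ u v, u ∈ N v → logMessageMap N θ z x (u, v) = x (u, v))
    (hx' : ∀ u v, u ∈ N v → logMessageMap N θ z x' (u, v) = x' (u, v)) {u v : V}
    (huv : u ∈ N v) : x (u, v) = x' (u, v) := by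
  have hK : 0 ≤ W * z := mul_nonneg hW₀ hz.le
  have hle : ∀ {x : V × V → ℝ}, (∀ u v, u ∈ N v → logMessageMap N θ z x (u, v) = x (u, v)) →
      ∀ u v, ∀ w ∈ (N u).erase v, x (w, u) ≤ log z := fun hx u _ w hw =>
    hx w u (mem_of_mem_erase hw) ▸ logMessageMap_le hθ _ _
  have hbound : ∀ n : ℕ, ∀ u v, u ∈ N v →
      |x (u, v) - x' (u, v)| ≤ (W * z / (1 + W * z)) ^ n * log (1 + W * z) := by
    intro n
    induction n with
    | zero =>
      intro u v huv
      rw [← hx u v huv, ← hx' u v huv, pow_zero, one_mul, abs_sub_le_iff]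
      have := log_sub_log_one_add_le_logMessageMap hz hθ hW (hle hx u v)
      have := log_sub_log_one_add_le_logMessageMap hz hθ hW (hle hx' u v)
      have := logMessageMap_le (z := z) hθ x (u, v)
      have := logMessageMap_le (z := z) hθ x' (u, v)
      constructor <;> linarith
    | succ n ih =>
      intro u v huv
      rw [← hx u v huv, ← hx' u v huv, pow_succ', mul_assoc]
      exact abs_logMessageMap_sub_le hz hθ hW ((abs_nonneg _).trans (ih u v huv))
        (hle hx u v) (hle hx' u v) fun w hw => ih w u (mem_of_mem_erase hw)
  exact eq_of_abs_sub_le_pow_mul (div_nonneg hK (by linarith))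
    ((div_lt_one (by linarith)).2 (lt_one_add _)) fun n => hbound n u v huv

end LogMessageMap

theorem tree_message_fixed_point_unique_general {V : Type*} (T : SimpleGraph V)
    (D : ℕ) (hfin : ∀ v : V, (T.neighborSet v).Finite)
    (hdeg : ∀ v : V, (hfin v).toFinset.card ≤ D)
    (θ : Sym2 V → ℝ) (C : ℝ) (hC : 0 < C)
    (hθ : ∀ e ∈ T.edgeSet, 0 < θ e ∧ θ e ≤ C)
    (z : ℝ) (hz : 0 < z) :
    ∃ y : V × V → ℝ,
      (∀ u v : V, T.Adj u v → 0 < y (u, v) ∧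
        y (u, v) = z / (1 + ∑ w ∈ (hfin u).toFinset.erase v, θ s(w, u) * y (w, u))) ∧
      ∀ y' : V × V → ℝ,
        (∀ u v : V, T.Adj u v → 0 < y' (u, v) ∧
          y' (u, v) = z / (1 + ∑ w ∈ (hfin u).toFinset.erase v, θ s(w, u) * y' (w, u))) →
        ∀ u v : V, T.Adj u v → y' (u, v) = y (u, v) := by
  have hN : ∀ {u w}, w ∈ (hfin u).toFinset ↔ T.Adj u w := by simp
  have hθN : ∀ u, ∀ w ∈ (hfin u).toFinset, 0 < θ s(w, u) ∧ θ s(w, u) ≤ C := fun u w hw =>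
    hθ _ (T.mem_edgeSet.2 (hN.1 hw).symm)
  have hθ₀ : ∀ u, ∀ w ∈ (hfin u).toFinset, 0 ≤ θ s(w, u) := fun u w hw => (hθN u w hw).1.le
  have hW : ∀ u, ∑ w ∈ (hfin u).toFinset, θ s(w, u) ≤ D * C := fun u =>
    (sum_le_card_nsmul _ _ C fun w hw => (hθN u w hw).2).trans <| by
      rw [nsmul_eq_mul]; gcongr; exact_mod_cast hdeg u
  have hW₀ : (0 : ℝ) ≤ D * C := mul_nonneg D.cast_nonneg hC.le
  obtain ⟨x, hx⟩ := exists_isFixedPt_logMessageMap hz hθ₀ hW hW₀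
  refine ⟨exp ∘ x, fun u v _ => ⟨exp_pos _, ?_⟩, fun y' hy' u v huv => ?_⟩
  · have hlog := logMessageMap_comp_log (u := u) (v := v) hz hθ₀ (y := exp ∘ x)
      fun w _ => exp_pos _
    rw [show log ∘ exp ∘ x = x from funext fun p => log_exp _, hx.eq] at hlog
    rw [comp_apply, hlog]
    exact exp_log <| div_pos hz <|
      add_pos_of_pos_of_nonneg one_pos (sum_erase_mul_exp_nonneg hθ₀ x u v)
  · have hfix : ∀ a b, a ∈ (hfin b).toFinset →
        logMessageMap _ θ z (log ∘ y') (a, b) = (log ∘ y') (a, b) := fun a b hab => by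
      rw [logMessageMap_comp_log hz hθ₀ fun w hw => (hy' w a (hN.1 (mem_of_mem_erase hw)).symm).1,
        ← (hy' a b (hN.1 hab).symm).2, comp_apply]
    have := eq_of_logMessageMap_eq_self hz hθ₀ hW hW₀ (fun a b _ => congrFun hx (a, b))
      hfix (hN.2 huv.symm)
    rw [← exp_log (hy' u v huv).1, comp_apply, this, comp_apply]

/-- On a (possibly infinite) tree with uniformly bounded degrees and
uniformly bounded positive edge weights, for every `z > 0` the message recursion
`y_{u→v} = z / (1 + ∑_{w ∈ ∂u∖{v}} θ_{wu} y_{w→u})` has exactly one positive solution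
on directed edges. -/
theorem tree_message_fixed_point_unique {V : Type*} (T : SimpleGraph V) (hT : T.IsTree)
    (D : ℕ) (hfin : ∀ v : V, (T.neighborSet v).Finite)
    (hdeg : ∀ v : V, (hfin v).toFinset.card ≤ D)
    (θ : Sym2 V → ℝ) (C : ℝ) (hC : 0 < C)
    (hθ : ∀ e ∈ T.edgeSet, 0 < θ e ∧ θ e ≤ C)
    (z : ℝ) (hz : 0 < z) :
    ∃ y : V × V → ℝ,
      (∀ u v : V, T.Adj u v → 0 < y (u, v) ∧
        y (u, v) = z / (1 + ∑ w ∈ (hfin u).toFinset.erase v, θ s(w, u) * y (w, u))) ∧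
      ∀ y' : V × V → ℝ,
        (∀ u v : V, T.Adj u v → 0 < y' (u, v) ∧
          y' (u, v) = z / (1 + ∑ w ∈ (hfin u).toFinset.erase v, θ s(w, u) * y' (w, u))) →
        ∀ u v : V, T.Adj u v → y' (u, v) = y (u, v) :=
  tree_message_fixed_point_unique_general T D hfin hdeg θ C hC hθ z hz
end
end
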